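/- arXiv:2407.01383 — 8 statements merged into one kernel-verified Lean document; each statement's English description precedes it below -/
import Mathlib

section
/- Let (N,v) be a simple monotone game, let i, j, k be three distinct players of N, and let T ⊆ N\{i,j,k}. Define I(ijk,T) = v({i,j,k}∪T) − v({i,j}∪T) − v({j,k}∪T) − v({i,k}∪T) + v({i}∪T) + v({j}∪T) + v({k}∪T) − v(T). Then −2 ≤ I(ijk,T) ≤ 1. -/
open Finset

variable {α : Type*} [DecidableEq α]

/-- A simple monotone game on the player set `N`: `v` maps coalitions to `{0,1}`,
`v ∅ = 0`, `v N = 1`, and `v` is monotone on subsets of `N`. -/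
structure SimpleGame (N : Finset α) (v : Finset α → ℝ) : Prop where
  empty : v ∅ = 0
  full : v N = 1
  mono : ∀ ⦃S T : Finset α⦄, S ⊆ T → T ⊆ N → v S ≤ v T
  binary : ∀ S ⊆ N, v S = 0 ∨ v S = 1

/-- Block interaction indicator `BI v {S₁,S₂} T = v(S₁∪S₂∪T) − v(S₁∪T) − v(S₂∪T) + v(T)`. -/
noncomputable def BI (v : Finset α → ℝ) (π : Sym2 (Finset α)) (T : Finset α) : ℝ :=
  Sym2.lift ⟨fun A B => v (A ∪ B ∪ T) - v (A ∪ T) - v (B ∪ T) + v T,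
    fun A B => by simp only []; rw [Finset.union_comm A B]; ring⟩ π

/-- `Π₂(S)`: the set of unordered partitions of `S` into two nonempty parts. -/
def Pi2 (S : Finset α) : Finset (Sym2 (Finset α)) :=
  (S.powerset.filter fun Q => Q ≠ ∅ ∧ Q ≠ S).image fun Q => s(Q, S \ Q)

/-- `S` is critical with respect to `T`: `v(S∪T) − v(T) = 1`. -/
def Critical (v : Finset α → ℝ) (S T : Finset α) : Prop := v (S ∪ T) - v T = 1

/-- `S` is essential critical with respect to `T`: `S` is critical wrt `T` and no
proper nonempty subset of `S` is critical wrt `T`. -/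
def EssentialCritical (v : Finset α → ℝ) (S T : Finset α) : Prop :=
  Critical v S T ∧ ∀ S' : Finset α, S' ⊂ S → S'.Nonempty → ¬ Critical v S' T

/-- The attitude `A_p(S,T)` of `S` towards `T` under the distribution `p` on `Π₂(S)`. -/
noncomputable def attitude (v : Finset α → ℝ) (p : Sym2 (Finset α) → ℝ)
    (S T : Finset α) : ℝ :=
  ∑ π ∈ Pi2 S, p π * BI v π T

/-- The coopetition index `C_{p,q}(S)`. -/
noncomputable def coop (N : Finset α) (v : Finset α → ℝ)
    (p : Sym2 (Finset α) → ℝ) (q : Finset α → ℝ) (S : Finset α) : ℝ :=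
  ∑ T ∈ (N \ S).powerset, q T * attitude v p S T

/-- `Σ_S(N)`: orderings of `N` (as lists) in which the elements of `S` occupy
consecutive positions. -/
noncomputable def SigmaOrd (N S : Finset α) : Finset (List α) := by
  classical
  exact N.toList.permutations.toFinset.filter
    fun l => ∃ k ∈ Finset.range (l.length + 1), ((l.drop k).take S.card).toFinset = S

/-- Sequential attitude `AS(S,σ)` of `S` towards the ordering `l`:
the average over `k = 1, …, s−1` of the block interaction between the first `k` and the
last `s−k` elements of the block of `S` in `l`, against the predecessors of `S` in `l`. -/
noncomputable def seqAttitude (v : Finset α → ℝ) (S : Finset α) (l : List α) : ℝ :=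
  (1 / ((S.card : ℝ) - 1)) * ∑ k ∈ Finset.Icc 1 (S.card - 1),
    BI v (s((((l.dropWhile fun x => decide (x ∉ S)).take S.card).take k).toFinset,
            (((l.dropWhile fun x => decide (x ∉ S)).take S.card).drop k).toFinset))
      (l.takeWhile fun x => decide (x ∉ S)).toFinset

/-- Shapley-Owen coopetition index defined through orderings. -/
noncomputable def C_SO_ord (N : Finset α) (v : Finset α → ℝ) (S : Finset α) : ℝ :=
  (1 / ((SigmaOrd N S).card : ℝ)) * ∑ l ∈ SigmaOrd N S, seqAttitude v S l

/-- Shapley-Owen weight on partitions `{Q, S\Q}`: `2·q!·(s−q)!/((s−1)·s!)`. -/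
noncomputable def soWeight (S : Finset α) : Sym2 (Finset α) → ℝ :=
  Sym2.lift ⟨fun A B => (2 * A.card.factorial * B.card.factorial : ℝ) /
      (((S.card : ℝ) - 1) * (S.card.factorial : ℝ)),
    fun A B => by simp only []; ring⟩

/-- Shapley-Owen weight on external coalitions: `t!·(n−s−t)!/(n−s+1)!`. -/
noncomputable def soExt (N S T : Finset α) : ℝ :=
  (T.card.factorial * (N.card - S.card - T.card).factorial : ℝ) /
    ((N.card - S.card + 1).factorial : ℝ)

/-- Shapley-Owen coopetition index (closed formula). -/
noncomputable def C_SO (N : Finset α) (v : Finset α → ℝ) (S : Finset α) : ℝ :=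
  ∑ T ∈ (N \ S).powerset, soExt N S T * ∑ π ∈ Pi2 S, soWeight S π * BI v π T

/-- Banzhaf coopetition index. -/
noncomputable def C_Bz (N : Finset α) (v : Finset α → ℝ) (S : Finset α) : ℝ :=
  (1 / ((2 : ℝ) ^ (N.card - S.card) * ((2 : ℝ) ^ (S.card - 1) - 1))) *
    ∑ T ∈ (N \ S).powerset, ∑ π ∈ Pi2 S, BI v π T

/-- Decisiveness index `D_{p,q}(S)`. -/
noncomputable def decis (N : Finset α) (v : Finset α → ℝ)
    (p : Sym2 (Finset α) → ℝ) (q : Finset α → ℝ) (S : Finset α) : ℝ :=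
  ∑ T ∈ (N \ S).powerset, q T * ∑ π ∈ Pi2 S, p π * |BI v π T|

/-- Banzhaf decisiveness index. -/
noncomputable def D_Bz (N : Finset α) (v : Finset α → ℝ) (S : Finset α) : ℝ :=
  (1 / ((2 : ℝ) ^ (N.card - S.card) * ((2 : ℝ) ^ (S.card - 1) - 1))) *
    ∑ T ∈ (N \ S).powerset, ∑ π ∈ Pi2 S, |BI v π T|

/-- Shapley-Owen decisiveness index. -/
noncomputable def D_SO (N : Finset α) (v : Finset α → ℝ) (S : Finset α) : ℝ :=
  ∑ T ∈ (N \ S).powerset, soExt N S T * ∑ π ∈ Pi2 S, soWeight S π * |BI v π T|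

/-- The apex game on `N` with apex player `a`. -/
noncomputable def apexGame (N : Finset α) (a : α) : Finset α → ℝ :=
  fun S => if (a ∈ S ∧ (S \ {a}).Nonempty) ∨ S = N \ {a} then 1 else 0

set_option maxHeartbeats 4000000 in
/-- for three distinct players `i, j, k` and `T ⊆ N \ {i,j,k}`, the
interaction indicator `I(ijk,T)` lies between `-2` and `1`. -/
theorem statement1 (N : Finset α) (v : Finset α → ℝ) (hv : SimpleGame N v)
    (i j k : α) (hi : i ∈ N) (hj : j ∈ N) (hk : k ∈ N)
    (hij : i ≠ j) (hik : i ≠ k) (hjk : j ≠ k)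
    (T : Finset α) (hT : T ⊆ N \ {i, j, k}) :
    -2 ≤ v ({i, j, k} ∪ T) - v ({i, j} ∪ T) - v ({j, k} ∪ T) - v ({i, k} ∪ T)
        + v ({i} ∪ T) + v ({j} ∪ T) + v ({k} ∪ T) - v T ∧
    v ({i, j, k} ∪ T) - v ({i, j} ∪ T) - v ({j, k} ∪ T) - v ({i, k} ∪ T)
        + v ({i} ∪ T) + v ({j} ∪ T) + v ({k} ∪ T) - v T ≤ 1 := by
  have hTN : T ⊆ N := hT.trans (Finset.sdiff_subset)
  have hsub : ∀ S : Finset α, S ⊆ {i, j, k} → S ∪ T ⊆ N := by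
    intro S hS
    apply Finset.union_subset _ hTN
    refine hS.trans ?_
    intro x hx
    simp only [Finset.mem_insert, Finset.mem_singleton] at hx
    rcases hx with h | h | h <;> subst h <;> assumption
  have h3 : ({i, j, k} : Finset α) ∪ T ⊆ N := hsub _ (by rfl)
  have hij' : ({i, j} : Finset α) ∪ T ⊆ N := hsub _ (by intro x; simp; tauto)
  have hjk' : ({j, k} : Finset α) ∪ T ⊆ N := hsub _ (by intro x; simp; tauto)
  have hik' : ({i, k} : Finset α) ∪ T ⊆ N := hsub _ (by intro x; simp; tauto)
  have hi' : ({i} : Finset α) ∪ T ⊆ N := hsub _ (by intro x; simp; tauto)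
  have hj' : ({j} : Finset α) ∪ T ⊆ N := hsub _ (by intro x; simp; tauto)
  have hk' : ({k} : Finset α) ∪ T ⊆ N := hsub _ (by intro x; simp; tauto)
  have msub : ∀ A B : Finset α, A ⊆ B → A ∪ T ⊆ B ∪ T := fun A B h =>
    Finset.union_subset_union h (le_refl T)
  -- monotone inequalities
  have m1 : v ({i} ∪ T) ≤ v ({i, j} ∪ T) :=
    hv.mono (msub _ _ (by intro x; simp; tauto)) hij'
  have m2 : v ({i} ∪ T) ≤ v ({i, k} ∪ T) :=
    hv.mono (msub _ _ (by intro x; simp; tauto)) hik'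
  have m3 : v ({j} ∪ T) ≤ v ({i, j} ∪ T) :=
    hv.mono (msub _ _ (by intro x; simp; tauto)) hij'
  have m4 : v ({j} ∪ T) ≤ v ({j, k} ∪ T) :=
    hv.mono (msub _ _ (by intro x; simp; tauto)) hjk'
  have m5 : v ({k} ∪ T) ≤ v ({i, k} ∪ T) :=
    hv.mono (msub _ _ (by intro x; simp; tauto)) hik'
  have m6 : v ({k} ∪ T) ≤ v ({j, k} ∪ T) :=
    hv.mono (msub _ _ (by intro x; simp; tauto)) hjk'
  have m7 : v ({i, j} ∪ T) ≤ v ({i, j, k} ∪ T) :=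
    hv.mono (msub _ _ (by intro x; simp; tauto)) h3
  have m8 : v ({j, k} ∪ T) ≤ v ({i, j, k} ∪ T) :=
    hv.mono (msub _ _ (by intro x; simp; tauto)) h3
  have m9 : v ({i, k} ∪ T) ≤ v ({i, j, k} ∪ T) :=
    hv.mono (msub _ _ (by intro x; simp; tauto)) h3
  have m10 : v T ≤ v ({i} ∪ T) :=
    hv.mono (Finset.subset_union_right) hi'
  have m11 : v T ≤ v ({j} ∪ T) :=
    hv.mono (Finset.subset_union_right) hj'
  have m12 : v T ≤ v ({k} ∪ T) :=
    hv.mono (Finset.subset_union_right) hk'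
  have b1 := hv.binary _ h3
  have b2 := hv.binary _ hij'
  have b3 := hv.binary _ hjk'
  have b4 := hv.binary _ hik'
  have b5 := hv.binary _ hi'
  have b6 := hv.binary _ hj'
  have b7 := hv.binary _ hk'
  have b8 := hv.binary _ hTN
  constructor <;>
    rcases b1 with h1 | h1 <;> rcases b2 with h2 | h2 <;> rcases b3 with h3' | h3' <;>
    rcases b4 with h4 | h4 <;> rcases b5 with h5 | h5 <;> rcases b6 with h6 | h6 <;>
    rcases b7 with h7 | h7 <;> rcases b8 with h8 | h8 <;> linarith
end

section
/- Let (N,v) be a simple monotone game, let T ⊂ N with |T| ≤ |N|−2, let S ⊆ N\T with |S| ≥ 2 be critical with respect to T, and let p_S be a strictly positive probability distribution on Π₂(S) (i.e. p_S(π) > 0 for all π ∈ Π₂(S) and the values sum to 1). Then the attitude A_p(S,T) = Σ_{π∈Π₂(S)} p_S(π)·BI(π,T) equals 1 if and only if S is essential critical with respect to T. -/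
open Finset

variable {α : Type*} [DecidableEq α]

/-- if `S` (with `|S| ≥ 2`) is critical wrt `T` and `p` is a strictly
positive probability distribution on `Π₂(S)`, then the attitude `A_p(S,T)` equals `1`
iff `S` is essential critical wrt `T`. -/
theorem statement2 (N : Finset α) (v : Finset α → ℝ) (hv : SimpleGame N v)
    (T : Finset α) (hTN : T ⊂ N) (hTcard : T.card ≤ N.card - 2)
    (S : Finset α) (hS : S ⊆ N \ T) (hs : 2 ≤ S.card)
    (hcrit : Critical v S T)
    (p : Sym2 (Finset α) → ℝ)
    (hp_pos : ∀ π ∈ Pi2 S, 0 < p π) (hp_sum : ∑ π ∈ Pi2 S, p π = 1) :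
    attitude v p S T = 1 ↔ EssentialCritical v S T := by
  classical
  have hTsub : T ⊆ N := hTN.subset
  have hSN : S ⊆ N := hS.trans sdiff_subset
  have hST : S ∪ T ⊆ N := union_subset hSN hTsub
  have hnn : ∀ A ⊆ N, 0 ≤ v A := by
    intro A hA; rcases hv.binary A hA with h | h <;> simp [h]
  have hvT : v T = 0 := by
    rcases hv.binary T hTsub with h | h
    · exact h
    · exfalso
      unfold Critical at hcrit
      rcases hv.binary (S ∪ T) hST with h2 | h2 <;> rw [h2, h] at hcrit <;> norm_num at hcrit
  have hvST : v (S ∪ T) = 1 := by unfold Critical at hcrit; linarith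
  have hcritIff : ∀ S' : Finset α, (Critical v S' T ↔ v (S' ∪ T) = 1) := by
    intro S'; unfold Critical; constructor <;> intro <;> linarith
  have hQT : ∀ Q ⊆ S, Q ∪ T ⊆ N := fun Q hQ => union_subset (hQ.trans hSN) hTsub
  have hBI : ∀ Q ⊆ S, BI v s(Q, S \ Q) T = 1 - v (Q ∪ T) - v ((S \ Q) ∪ T) := by
    intro Q hQ
    simp only [BI, Sym2.lift_mk, union_sdiff_of_subset hQ, hvST, hvT]
    ring
  have hmem : ∀ π ∈ Pi2 S, ∃ Q, Q ⊆ S ∧ Q ≠ ∅ ∧ Q ≠ S ∧ π = s(Q, S \ Q) := by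
    intro π hπ
    simp only [Pi2, mem_image, mem_filter, mem_powerset] at hπ
    obtain ⟨Q, ⟨hQ, h1, h2⟩, rfl⟩ := hπ
    exact ⟨Q, hQ, h1, h2, rfl⟩
  have hA : attitude v p S T = 1 ↔ ∀ π ∈ Pi2 S, BI v π T = 1 := by
    unfold attitude
    have hle : ∀ π ∈ Pi2 S, p π * BI v π T ≤ p π := by
      intro π hπ
      obtain ⟨Q, hQ, _, _, rfl⟩ := hmem π hπ
      have h1 := hnn _ (hQT Q hQ)
      have h2 := hnn _ (hQT (S \ Q) sdiff_subset)
      have hBle : BI v s(Q, S \ Q) T ≤ 1 := by rw [hBI Q hQ]; linarith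
      calc p s(Q, S \ Q) * BI v s(Q, S \ Q) T ≤ p s(Q, S \ Q) * 1 :=
            mul_le_mul_of_nonneg_left hBle (hp_pos _ hπ).le
        _ = p s(Q, S \ Q) := mul_one _
    constructor
    · intro h π hπ
      have hall := (Finset.sum_eq_sum_iff_of_le hle).mp (by rw [h, hp_sum])
      have h2 := hall π hπ
      have hne : p π ≠ 0 := (hp_pos _ hπ).ne'
      exact mul_left_cancel₀ hne (by rw [h2, mul_one])
    · intro h
      calc ∑ π ∈ Pi2 S, p π * BI v π T = ∑ π ∈ Pi2 S, p π :=
            Finset.sum_congr rfl fun π hπ => by rw [h π hπ, mul_one]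
        _ = 1 := hp_sum
  rw [hA]
  constructor
  · rintro h
    refine ⟨hcrit, fun S' hS' hne hc => ?_⟩
    have hQ : S' ⊆ S := hS'.subset
    have hπ : s(S', S \ S') ∈ Pi2 S := by
      simp only [Pi2, mem_image, mem_filter, mem_powerset]
      exact ⟨S', ⟨hQ, nonempty_iff_ne_empty.mp hne, hS'.ne⟩, rfl⟩
    have hb := h _ hπ
    rw [hBI _ hQ] at hb
    have h1 := hnn _ (hQT S' hQ)
    have h2 := hnn _ (hQT (S \ S') sdiff_subset)
    have hc1 : v (S' ∪ T) = 1 := (hcritIff S').mp hc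
    linarith
  · rintro ⟨-, hess⟩ π hπ
    obtain ⟨Q, hQ, h1, h2, rfl⟩ := hmem π hπ
    rw [hBI Q hQ]
    have hQ0 : v (Q ∪ T) = 0 := by
      rcases hv.binary _ (hQT Q hQ) with h | h
      · exact h
      · exact absurd ((hcritIff Q).mpr h)
          (hess Q (ssubset_of_subset_of_ne hQ h2) (nonempty_iff_ne_empty.mpr h1))
    have hQ0' : v ((S \ Q) ∪ T) = 0 := by
      rcases hv.binary _ (hQT _ sdiff_subset) with h | h
      · exact h
      · refine absurd ((hcritIff _).mpr h) (hess _ ?_ ?_)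
        · exact sdiff_ssubset hQ (nonempty_iff_ne_empty.mpr h1)
        · exact sdiff_nonempty.mpr fun hsub => h2 (subset_antisymm hQ hsub)
    rw [hQ0, hQ0']; ring
end

section
/- Let (N,v) be a simple monotone game, let T ⊂ N with |T| ≤ |N|−2, let S ⊆ N\T with |S| ≥ 2 be critical with respect to T, and let p_S be a strictly positive probability distribution on Π₂(S) (i.e. p_S(π) > 0 for all π ∈ Π₂(S) and the values sum to 1). Then the attitude A_p(S,T) = Σ_{π∈Π₂(S)} p_S(π)·BI(π,T) equals −1 if and only if every player i ∈ S is critical with respect to T. -/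
open Finset

variable {α : Type*} [DecidableEq α]

/-- if `S` (with `|S| ≥ 2`) is critical wrt `T` and `p` is a strictly
positive probability distribution on `Π₂(S)`, then the attitude `A_p(S,T)` equals `-1`
iff every player of `S` is critical wrt `T`. -/
theorem statement3 (N : Finset α) (v : Finset α → ℝ) (hv : SimpleGame N v)
    (T : Finset α) (hTN : T ⊂ N) (hTcard : T.card ≤ N.card - 2)
    (S : Finset α) (hS : S ⊆ N \ T) (hs : 2 ≤ S.card)
    (hcrit : Critical v S T)
    (p : Sym2 (Finset α) → ℝ)
    (hp_pos : ∀ π ∈ Pi2 S, 0 < p π) (hp_sum : ∑ π ∈ Pi2 S, p π = 1) :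
    attitude v p S T = -1 ↔ ∀ i ∈ S, Critical v {i} T := by

  classical
  have hTsub : T ⊆ N := hTN.subset
  have hSN : S ⊆ N := hS.trans sdiff_subset
  have hST : S ∪ T ⊆ N := union_subset hSN hTsub
  have hSTbin := hv.binary (S ∪ T) hST
  have hTbin := hv.binary T hTsub
  have hT0 : v T = 0 := by
    unfold Critical at hcrit
    rcases hTbin with h | h
    · exact h
    · exfalso; rcases hSTbin with h2 | h2 <;> rw [h, h2] at hcrit <;> norm_num at hcrit
  have hST1 : v (S ∪ T) = 1 := by unfold Critical at hcrit; linarith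
  -- value of BI on elements of Pi2 S
  have hBIval : ∀ Q : Finset α, Q ⊆ S → Q ≠ ∅ → Q ≠ S →
      BI v s(Q, S \ Q) T = 1 - v (Q ∪ T) - v ((S \ Q) ∪ T) := by
    intro Q hQ _ _
    have hU : Q ∪ (S \ Q) = S := Finset.union_sdiff_of_subset hQ
    simp only [BI, Sym2.lift_mk]
    rw [hU, hST1, hT0]; ring
  have hbin : ∀ Q : Finset α, Q ⊆ S → v (Q ∪ T) = 0 ∨ v (Q ∪ T) = 1 := by
    intro Q hQ
    exact hv.binary _ (union_subset (hQ.trans hSN) hTsub)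
  have hBIge : ∀ π ∈ Pi2 S, -1 ≤ BI v π T := by
    intro π hπ
    simp only [Pi2, mem_image, mem_filter, mem_powerset] at hπ
    obtain ⟨Q, ⟨hQS, hQne, hQnS⟩, rfl⟩ := hπ
    rw [hBIval Q hQS hQne hQnS]
    rcases hbin Q hQS with h | h <;> rcases hbin (S \ Q) sdiff_subset with h2 | h2 <;>
      rw [h, h2] <;> norm_num
  constructor
  · intro hA i hi
    -- every term p π * (BI + 1) is nonneg and sum is 0
    have hsum0 : ∑ π ∈ Pi2 S, p π * (BI v π T + 1) = 0 := by
      have : ∑ π ∈ Pi2 S, p π * (BI v π T + 1)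
          = attitude v p S T + ∑ π ∈ Pi2 S, p π := by
        unfold attitude; rw [← Finset.sum_add_distrib]; congr 1; ext π; ring
      rw [this, hA, hp_sum]; ring
    have hall : ∀ π ∈ Pi2 S, p π * (BI v π T + 1) = 0 := by
      intro π hπ
      have := (Finset.sum_eq_zero_iff_of_nonneg (fun π hπ => by
        have h1 := hBIge π hπ
        have h2 := (hp_pos π hπ).le
        nlinarith)).mp hsum0
      exact this π hπ
    have hBIeq : ∀ π ∈ Pi2 S, BI v π T = -1 := by
      intro π hπ
      have h := hall π hπ
      have hp := hp_pos π hπ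
      have : BI v π T + 1 = 0 := by
        rcases mul_eq_zero.mp h with h' | h'
        · exact absurd h' (ne_of_gt hp)
        · exact h'
      linarith
    -- apply to the partition ({i}, S \ {i})
    have hiS : ({i} : Finset α) ⊆ S := singleton_subset_iff.mpr hi
    have hne : ({i} : Finset α) ≠ ∅ := by simp
    have hns : ({i} : Finset α) ≠ S := by
      intro h; rw [← h] at hs; simp at hs
    have hmem : s(({i} : Finset α), S \ {i}) ∈ Pi2 S := by
      simp only [Pi2, mem_image, mem_filter, mem_powerset]
      exact ⟨{i}, ⟨hiS, hne, hns⟩, rfl⟩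
    have := hBIeq _ hmem
    rw [hBIval {i} hiS hne hns] at this
    have h1 : v ({i} ∪ T) = 1 := by
      rcases hbin {i} hiS with h | h
      · exfalso
        rcases hbin (S \ {i}) sdiff_subset with h2 | h2 <;> rw [h, h2] at this <;>
          norm_num at this
      · exact h
    unfold Critical; rw [h1, hT0]; ring
  · intro hall
    have hBIeq : ∀ π ∈ Pi2 S, BI v π T = -1 := by
      intro π hπ
      simp only [Pi2, mem_image, mem_filter, mem_powerset] at hπ
      obtain ⟨Q, ⟨hQS, hQne, hQnS⟩, rfl⟩ := hπ
      have hone : ∀ R : Finset α, R ⊆ S → R.Nonempty → v (R ∪ T) = 1 := by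
        intro R hRS ⟨j, hj⟩
        have hjS := hRS hj
        have hcj := hall j hjS
        unfold Critical at hcj
        have hj1 : v ({j} ∪ T) = 1 := by rw [hT0] at hcj; linarith
        have hmono : v ({j} ∪ T) ≤ v (R ∪ T) :=
          hv.mono (union_subset_union (singleton_subset_iff.mpr hj) subset_rfl)
            (union_subset (hRS.trans hSN) hTsub)
        rcases hbin R hRS with h | h
        · exfalso; rw [h, hj1] at hmono; norm_num at hmono
        · exact h
      rw [hBIval Q hQS hQne hQnS,
        hone Q hQS (nonempty_iff_ne_empty.mpr hQne),
        hone (S \ Q) sdiff_subset ?_]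
      · ring
      · rw [sdiff_nonempty]; intro h; exact hQnS (subset_antisymm hQS h)
    unfold attitude
    calc ∑ π ∈ Pi2 S, p π * BI v π T = ∑ π ∈ Pi2 S, p π * (-1) :=
          Finset.sum_congr rfl (fun π hπ => by rw [hBIeq π hπ])
      _ = -1 := by rw [← Finset.sum_mul, hp_sum]; ring
end

section
/- Let (N,v) be a simple monotone game and let T ⊂ N with |T| ≤ |N|−2. Suppose i* ∈ N\T is a player critical with respect to T, S ⊆ N\(T∪{i*}) is an essential critical coalition with respect to T, and i* ∉ S. Then for every probability distribution p on Π₂(S∪{i*}), the attitude satisfies A_p(S∪{i*},T) = −p({S,{i*}}). -/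
open Finset

variable {α : Type*} [DecidableEq α]

/-- if `i*` is a critical player wrt `T` and `S` is essential critical
wrt `T` with `i* ∉ S`, then for every probability distribution `p` on `Π₂(S ∪ {i*})`
the attitude satisfies `A_p(S ∪ {i*}, T) = −p({S, {i*}})`. -/
theorem statement4 (N : Finset α) (v : Finset α → ℝ) (hv : SimpleGame N v)
    (T : Finset α) (hTN : T ⊂ N) (hTcard : T.card ≤ N.card - 2)
    (i : α) (hiN : i ∈ N) (hiT : i ∉ T) (hicrit : Critical v {i} T)
    (S : Finset α) (hS : S ⊆ N \ (T ∪ {i})) (hiS : i ∉ S)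
    (hSec : EssentialCritical v S T)
    (p : Sym2 (Finset α) → ℝ)
    (hp0 : ∀ π ∈ Pi2 (S ∪ {i}), 0 ≤ p π)
    (hp1 : ∑ π ∈ Pi2 (S ∪ {i}), p π = 1) :
    attitude v p (S ∪ {i}) T = - p (s(S, {i})) := by
  classical
  have hTsub : T ⊆ N := hTN.subset
  have hSN : S ⊆ N := hS.trans sdiff_subset
  have hUN : S ∪ {i} ∪ T ⊆ N := by
    apply union_subset (union_subset hSN _) hTsub
    simpa using hiN
  have hiTN : ({i} : Finset α) ∪ T ⊆ N := by
    apply union_subset _ hTsub; simpa using hiN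
  have hviT01 := hv.binary _ hiTN
  have hvT01 := hv.binary T hTsub
  have hvT0 : v T = 0 := by
    unfold Critical at hicrit
    rcases hvT01 with h | h
    · exact h
    · rcases hviT01 with h' | h' <;> linarith
  have hviT : v ({i} ∪ T) = 1 := by
    unfold Critical at hicrit; linarith
  have one_of_ge : ∀ X, X ⊆ N → 1 ≤ v X → v X = 1 := by
    intro X hX h
    rcases hv.binary X hX with h' | h'
    · linarith
    · exact h'
  have hvST : v (S ∪ T) = 1 := by
    have := hSec.1; unfold Critical at this; linarith
  have hUT : v (S ∪ {i} ∪ T) = 1 := by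
    apply one_of_ge _ hUN
    have : S ∪ T ⊆ S ∪ {i} ∪ T := by
      exact union_subset_union_left subset_union_left
    calc (1:ℝ) = v (S ∪ T) := hvST.symm
      _ ≤ v (S ∪ {i} ∪ T) := hv.mono this hUN
  have hBfull : ∀ B, B ⊆ S ∪ {i} → i ∈ B → v (B ∪ T) = 1 := by
    intro B hB hiB
    have hBN : B ∪ T ⊆ N := union_subset (hB.trans (union_subset hSN (by simpa using hiN))) hTsub
    apply one_of_ge _ hBN
    have hsub : ({i} : Finset α) ∪ T ⊆ B ∪ T := by
      apply union_subset _ subset_union_right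
      simpa using (mem_union_left T hiB)
    calc (1:ℝ) = v ({i} ∪ T) := hviT.symm
      _ ≤ v (B ∪ T) := hv.mono hsub hBN
  have hAzero : ∀ A, A ⊆ S → A.Nonempty → A ≠ S → v (A ∪ T) = 0 := by
    intro A hA hAne hAneS
    have hcrit := hSec.2 A (Finset.ssubset_iff_subset_ne.mpr ⟨hA, hAneS⟩) hAne
    unfold Critical at hcrit
    have hAN : A ∪ T ⊆ N := union_subset (hA.trans hSN) hTsub
    rcases hv.binary _ hAN with h | h
    · exact h
    · exfalso; apply hcrit; linarith
  have hSne : S.Nonempty := by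
    rw [nonempty_iff_ne_empty]
    intro h
    have := hSec.1
    unfold Critical at this
    rw [h] at this
    simp at this
  have hUS : (S ∪ {i}) \ S = {i} := by
    rw [union_sdiff_left]
    exact sdiff_eq_self_of_disjoint (by simpa using hiS)
  -- ordered key lemma
  have ord : ∀ Q, Q ⊆ S → Q.Nonempty →
      BI v (s(Q, (S ∪ {i}) \ Q)) T = if Q = S then -1 else 0 := by
    intro Q hQS hQne
    have hiQ : i ∉ Q := fun h => hiS (hQS h)
    by_cases hQ : Q = S
    · subst hQ
      rw [if_pos rfl, hUS]
      simp only [BI, Sym2.lift_mk]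
      rw [hUT, hvST, hviT, hvT0]; ring
    · rw [if_neg hQ]
      have hdiff : (S ∪ {i}) \ Q = (S \ Q) ∪ {i} := by
        rw [union_sdiff_distrib]
        congr 1
        exact sdiff_eq_self_of_disjoint (by simpa using hiQ)
      rw [hdiff]
      simp only [BI, Sym2.lift_mk]
      have h1 : Q ∪ (S \ Q ∪ {i}) = S ∪ {i} := by
        rw [← union_assoc, union_sdiff_of_subset hQS]
      rw [h1, hUT, hAzero Q hQS hQne hQ,
        hBfull (S \ Q ∪ {i}) (union_subset (sdiff_subset.trans subset_union_left) subset_union_right) (by simp),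
        hvT0]
      ring
  have key : ∀ π ∈ Pi2 (S ∪ {i}), BI v π T = if π = s(S, ({i} : Finset α)) then -1 else 0 := by
    intro π hπ
    simp only [Pi2, mem_image, mem_filter, mem_powerset] at hπ
    obtain ⟨Q, ⟨hQsub, hQne, hQneU⟩, rfl⟩ := hπ
    obtain ⟨R, hRS, hRne, hform⟩ : ∃ R, R ⊆ S ∧ R.Nonempty ∧
        s(Q, (S ∪ {i}) \ Q) = s(R, (S ∪ {i}) \ R) := by
      by_cases hiQ : i ∈ Q
      · refine ⟨(S ∪ {i}) \ Q, ?_, ?_, ?_⟩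
        · intro x hx
          rcases mem_sdiff.mp hx with ⟨hx1, hx2⟩
          rcases mem_union.mp hx1 with h | h
          · exact h
          · exact absurd (mem_singleton.mp h ▸ hiQ) hx2
        · rw [sdiff_nonempty]
          intro h
          exact hQneU (subset_antisymm hQsub h)
        · rw [Finset.sdiff_sdiff_eq_self hQsub]; exact Sym2.eq_swap
      · refine ⟨Q, ?_, nonempty_iff_ne_empty.mpr hQne, rfl⟩
        intro x hx
        rcases mem_union.mp (hQsub hx) with h | h
        · exact h
        · exact absurd (mem_singleton.mp h ▸ hx) hiQ
    rw [hform, ord R hRS hRne]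
    by_cases hR : R = S
    · subst hR
      rw [if_pos rfl, if_pos (by rw [hUS])]
    · rw [if_neg hR, if_neg]
      intro h
      rw [Sym2.eq_iff] at h
      rcases h with ⟨h1, _⟩ | ⟨h1, _⟩
      · exact hR h1
      · have : i ∈ R := h1 ▸ mem_singleton_self i
        exact hiS (hRS this)
  unfold attitude
  have hc : s(S, ({i} : Finset α)) ∈ Pi2 (S ∪ {i}) := by
    simp only [Pi2, mem_image, mem_filter, mem_powerset]
    refine ⟨S, ⟨subset_union_left, nonempty_iff_ne_empty.mp hSne, ?_⟩, by rw [hUS]⟩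
    intro h
    exact hiS (h ▸ mem_union_right S (mem_singleton_self i))
  calc ∑ π ∈ Pi2 (S ∪ {i}), p π * BI v π T
      = ∑ π ∈ Pi2 (S ∪ {i}), (if π = s(S, ({i} : Finset α)) then -p π else 0) := by
        apply Finset.sum_congr rfl
        intro π hπ
        rw [key π hπ]
        split <;> ring
    _ = -p (s(S, ({i} : Finset α))) := by
        rw [Finset.sum_ite_eq' (Pi2 (S ∪ {i})) (s(S, ({i} : Finset α))) (fun π => -p π), if_pos hc]
end

section
/- Let (N,v) be a simple monotone game with n = |N| and let S ⊆ N with s = |S| ≥ 2. Then the Shapley-Owen coopetition index, defined as the average over all orderings σ of N in which the players of S occupy consecutive positions of the sequential attitude AS(S,σ), satisfies C_SO(S) = Σ_{T⊆N\S} (t!·(n−s−t)!/(n−s+1)!) · Σ_{{Q,S\Q}∈Π₂(S)} (2·q!·(s−q)!/((s−1)·s!)) · BI({Q,S\Q},T), where t = |T| and q = |Q|. -/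
open Finset

variable {α : Type*} [DecidableEq α]

/-! An ordering of `N` in which `S` is consecutive is the same as a position `m` for the block,
an ordering `u` of `N \ S` and an ordering `w` of `S`; the predecessors of `S` are then the first
`m` players of `u`. For fixed `m`, the orderings `u` whose first `m` players form `T` number
`t! (n - s - t)!`, and for a fixed cut `k` the orderings `w` whose first `k` players form `Q`
number `q! (s - q)!`. Every partition `{Q, S \ Q}` is met once through `Q` and once through
`S \ Q`, which is where the factor `2` comes from. -/

open scoped Nat

section Orderings

noncomputable def orderings (U : Finset α) : Finset (List α) := U.toList.permutations.toFinset

variable {U T : Finset α} {l : List α}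

theorem mem_orderings : l ∈ orderings U ↔ (l : Multiset α) = U.val := by
  rw [orderings, List.mem_toFinset, List.mem_permutations, ← Multiset.coe_eq_coe,
    Finset.coe_toList]

theorem mem_orderings_iff_nodup : l ∈ orderings U ↔ l.Nodup ∧ l.toFinset = U := by
  rw [mem_orderings, ← Finset.val_inj, List.toFinset_val]
  constructor
  · intro h
    have hl : l.Nodup := Multiset.coe_nodup.mp (h ▸ U.nodup)
    exact ⟨hl, by rw [hl.dedup, h]⟩
  · rintro ⟨hl, h⟩
    rwa [hl.dedup] at h

theorem length_of_mem_orderings (hl : l ∈ orderings U) : l.length = #U :=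
  congrArg Multiset.card (mem_orderings.mp hl)

theorem mem_orderings_of_perm {l' : List α} (h : l.Perm l') :
    l ∈ orderings U ↔ l' ∈ orderings U := by
  rw [mem_orderings, mem_orderings, Multiset.coe_eq_coe.mpr h]

theorem append_mem_orderings_iff (hT : T ⊆ U) {a b : List α} (ha : a ∈ orderings T) :
    a ++ b ∈ orderings U ↔ b ∈ orderings (U \ T) := by
  rw [mem_orderings, mem_orderings, ← Multiset.coe_add, mem_orderings.mp ha, Finset.sdiff_val,
    eq_tsub_iff_add_eq_of_le (Finset.val_le_iff.mpr hT), add_comm]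

theorem take_mem_orderings (hl : l ∈ orderings U) (k : ℕ) :
    l.take k ∈ orderings (l.take k).toFinset :=
  mem_orderings_iff_nodup.mpr
    ⟨(List.take_sublist _ _).nodup (mem_orderings_iff_nodup.mp hl).1, rfl⟩

theorem toFinset_take_subset (hl : l ∈ orderings U) (k : ℕ) : (l.take k).toFinset ⊆ U := by
  intro x hx
  rw [← (mem_orderings_iff_nodup.mp hl).2, List.mem_toFinset] at *
  exact List.mem_of_mem_take hx

theorem drop_mem_orderings (hl : l ∈ orderings U) (k : ℕ) :
    l.drop k ∈ orderings (U \ (l.take k).toFinset) := by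
  rwa [← append_mem_orderings_iff (toFinset_take_subset hl k) (take_mem_orderings hl k),
    List.take_append_drop]

theorem card_orderings (U : Finset α) : #(orderings U) = (#U)! := by
  rw [orderings, List.toFinset_card_of_nodup (List.nodup_permutations _ U.nodup_toList),
    List.length_permutations, Finset.length_toList]

theorem card_filter_orderings_take (hT : T ⊆ U) :
    #{u ∈ orderings U | (u.take #T).toFinset = T} = (#T)! * (#(U \ T))! := by
  rw [← card_orderings, ← card_orderings, ← card_product]
  refine card_nbij' (fun u => (u.take #T, u.drop #T)) (fun p => p.1 ++ p.2) ?_ ?_ ?_ ?_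
  · intro u hu
    obtain ⟨hu, hpre⟩ := mem_filter.mp hu
    have htake := take_mem_orderings hu #T
    have hdrop := drop_mem_orderings hu #T
    rw [hpre] at htake hdrop
    exact mem_product.mpr ⟨htake, hdrop⟩
  · rintro ⟨a, b⟩ hab
    obtain ⟨ha, hb⟩ := mem_product.mp hab
    refine mem_filter.mpr ⟨(append_mem_orderings_iff hT ha).mpr hb, ?_⟩
    rw [List.take_left' (length_of_mem_orderings ha), (mem_orderings_iff_nodup.mp ha).2]
  · intro u _
    exact List.take_append_drop _ u
  · rintro ⟨a, b⟩ hab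
    have ha := length_of_mem_orderings (mem_product.mp hab).1
    simp only [List.take_left' ha, List.drop_left' ha]

end Orderings

section PrefixSums

variable {M : Type*} [AddCommMonoid M]

theorem sum_orderings_take (U : Finset α) {m : ℕ} (hm : m ≤ #U) (g : Finset α → M) :
    ∑ u ∈ orderings U, g (u.take m).toFinset
      = ∑ T ∈ powersetCard m U, (m ! * (#U - m)!) • g T := by
  have hmaps : ∀ u ∈ orderings U, (u.take m).toFinset ∈ powersetCard m U := by
    intro u hu
    refine mem_powersetCard.mpr ⟨toFinset_take_subset hu m, ?_⟩
    rw [← length_of_mem_orderings (take_mem_orderings hu m), List.length_take,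
      length_of_mem_orderings hu, min_eq_left hm]
  rw [← sum_fiberwise_of_maps_to hmaps]
  refine sum_congr rfl fun T hT => ?_
  obtain ⟨hTU, rfl⟩ := mem_powersetCard.mp hT
  rw [sum_congr rfl fun u hu => by rw [(mem_filter.mp hu).2], sum_const,
    card_filter_orderings_take hTU, card_sdiff_of_subset hTU]

theorem sum_range_sum_orderings_take (U : Finset α) (g : Finset α → M) :
    ∑ m ∈ range (#U + 1), ∑ u ∈ orderings U, g (u.take m).toFinset
      = ∑ T ∈ U.powerset, ((#T)! * (#U - #T)!) • g T := by
  rw [sum_powerset]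
  refine sum_congr rfl fun m hm => ?_
  rw [sum_orderings_take U (Nat.lt_succ_iff.mp (mem_range.mp hm))]
  exact sum_congr rfl fun T hT => by rw [(mem_powersetCard.mp hT).2]

end PrefixSums

section Partitions

variable {M : Type*} [AddCommMonoid M]

theorem sum_mk_sdiff_eq_two_nsmul_sum_Pi2 (S : Finset α) (f : Sym2 (Finset α) → M) :
    ∑ Q ∈ S.powerset with Q ≠ ∅ ∧ Q ≠ S, f s(Q, S \ Q)
      = 2 • ∑ π ∈ Pi2 S, f π := by
  rw [← sum_fiberwise_of_maps_to (g := fun Q => s(Q, S \ Q)) (t := Pi2 S)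
    fun Q hQ => mem_image_of_mem _ hQ, smul_sum]
  refine sum_congr rfl fun π hπ => ?_
  obtain ⟨Q, hQ, rfl⟩ := mem_image.mp hπ
  obtain ⟨hQS, hQe, hQS'⟩ := by simpa only [mem_filter, mem_powerset] using hQ
  have hcompl : S \ (S \ Q) = Q := Finset.sdiff_sdiff_eq_self hQS
  have hfiber : ((S.powerset.filter fun Q' => Q' ≠ ∅ ∧ Q' ≠ S).filter
      fun Q' => s(Q', S \ Q') = s(Q, S \ Q)) = {Q, S \ Q} := by
    ext Q'
    simp only [mem_filter, mem_powerset, mem_insert, mem_singleton, Sym2.eq_iff]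
    constructor
    · rintro ⟨-, ⟨h, -⟩ | ⟨h, -⟩⟩ <;> simp [h]
    · rintro (rfl | rfl)
      · simp [hQS, hQe, hQS']
      · refine ⟨⟨sdiff_subset, ?_, ?_⟩, Or.inr ⟨rfl, hcompl⟩⟩
        · exact fun h => hQS' (hQS.antisymm (sdiff_eq_empty_iff_subset.mp h))
        · exact fun h => hQe ((Finset.sdiff_eq_self_iff_disjoint.mp h).symm.eq_bot_of_le hQS)
  have hne : Q ≠ S \ Q := by
    obtain ⟨x, hx⟩ := nonempty_iff_ne_empty.mpr hQe
    exact fun h => (mem_sdiff.mp (h ▸ hx)).2 hx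
  rw [hfiber, sum_pair hne, hcompl, Sym2.eq_swap, two_nsmul]

theorem sum_Icc_sum_powersetCard (S : Finset α) (h : Finset α → M) :
    ∑ k ∈ Icc 1 (#S - 1), ∑ Q ∈ powersetCard k S, h Q
      = ∑ Q ∈ S.powerset with Q ≠ ∅ ∧ Q ≠ S, h Q := by
  have hmaps :
      ∀ Q ∈ S.powerset.filter (fun Q => Q ≠ ∅ ∧ Q ≠ S), #Q ∈ Icc 1 (#S - 1) := by
    intro Q hQ
    obtain ⟨hQS, hQe, hQS'⟩ := by simpa only [mem_filter, mem_powerset] using hQ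
    have := card_lt_card (Finset.ssubset_iff_subset_ne.mpr ⟨hQS, hQS'⟩)
    have := card_pos.mpr (nonempty_iff_ne_empty.mpr hQe)
    exact mem_Icc.mpr ⟨by omega, by omega⟩
  rw [← sum_fiberwise_of_maps_to hmaps]
  refine sum_congr rfl fun k hk => sum_congr ?_ fun _ _ => rfl
  obtain ⟨hk1, hks⟩ := mem_Icc.mp hk
  ext Q
  simp only [mem_powersetCard, mem_filter, mem_powerset]
  constructor
  · rintro ⟨hQS, rfl⟩
    refine ⟨⟨hQS, fun h => ?_, fun h => ?_⟩, rfl⟩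
    · rw [h, card_empty] at hk1
      omega
    · rw [h] at hk1 hks
      omega
  · rintro ⟨⟨hQS, -⟩, rfl⟩
    exact ⟨hQS, rfl⟩

end Partitions

section BlockAttitude

variable (v : Finset α → ℝ) (S : Finset α)

noncomputable def blockSeqAttitude (w : List α) (T : Finset α) : ℝ :=
  (1 / ((#S : ℝ) - 1)) * ∑ k ∈ Icc 1 (#S - 1),
    BI v s((w.take k).toFinset, (w.drop k).toFinset) T

theorem seqAttitude_eq_blockSeqAttitude (l : List α) :
    seqAttitude v S l = blockSeqAttitude v S
      ((l.dropWhile fun x => decide (x ∉ S)).take #S)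
      (l.takeWhile fun x => decide (x ∉ S)).toFinset :=
  rfl

theorem soWeight_mk_sdiff {Q : Finset α} (hQ : Q ⊆ S) :
    soWeight S s(Q, S \ Q) = 2 * (#Q)! * (#S - #Q)! / ((#S - 1) * (#S)!) := by
  simp only [soWeight, Sym2.lift_mk, card_sdiff_of_subset hQ]

theorem sum_orderings_blockSeqAttitude {S} (hs : 2 ≤ #S) (T : Finset α) :
    ∑ w ∈ orderings S, blockSeqAttitude v S w T = (#S)! * attitude v (soWeight S) S T := by
  have hs1 : ((#S : ℝ) - 1) ≠ 0 := by
    have : (2 : ℝ) ≤ #S := by exact_mod_cast hs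
    linarith
  have hcut : ∀ k ∈ Icc 1 (#S - 1), ∑ w ∈ orderings S,
      BI v s((w.take k).toFinset, (w.drop k).toFinset) T
        = ∑ Q ∈ powersetCard k S, (k ! * (#S - k)! : ℝ) * BI v s(Q, S \ Q) T := by
    intro k hk
    have hks : k ≤ #S := by have := mem_Icc.mp hk; omega
    have hdrop : ∀ w ∈ orderings S, (w.drop k).toFinset = S \ (w.take k).toFinset :=
      fun w hw => (mem_orderings_iff_nodup.mp (drop_mem_orderings hw k)).2
    rw [sum_congr rfl fun w hw => by rw [hdrop w hw],
      sum_orderings_take S hks (fun Q => BI v s(Q, S \ Q) T)]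
    simp only [nsmul_eq_mul, Nat.cast_mul]
  calc ∑ w ∈ orderings S, blockSeqAttitude v S w T
      = (1 / ((#S : ℝ) - 1)) * ∑ k ∈ Icc 1 (#S - 1), ∑ w ∈ orderings S,
          BI v s((w.take k).toFinset, (w.drop k).toFinset) T := by
        simp only [blockSeqAttitude, ← mul_sum]
        rw [sum_comm]
    _ = ∑ k ∈ Icc 1 (#S - 1), ∑ Q ∈ powersetCard k S,
          (#S)! / 2 * (soWeight S s(Q, S \ Q) * BI v s(Q, S \ Q) T) := by
        rw [mul_sum]
        refine sum_congr rfl fun k hk => ?_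
        rw [hcut k hk, mul_sum]
        refine sum_congr rfl fun Q hQ => ?_
        obtain ⟨hQS, rfl⟩ := mem_powersetCard.mp hQ
        rw [soWeight_mk_sdiff S hQS]
        field_simp
    _ = (#S)! / 2 * ∑ Q ∈ S.powerset with Q ≠ ∅ ∧ Q ≠ S,
          soWeight S s(Q, S \ Q) * BI v s(Q, S \ Q) T := by
        rw [sum_Icc_sum_powersetCard, mul_sum]
    _ = (#S)! * attitude v (soWeight S) S T := by
        rw [sum_mk_sdiff_eq_two_nsmul_sum_Pi2 S (fun π => soWeight S π * BI v π T),
          attitude, two_nsmul]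
        ring

end BlockAttitude

section BlockOrderings

theorem takeWhile_dropWhile_not_mem_append {S : Finset α} {a w : List α}
    (ha : ∀ x ∈ a, x ∉ S) (hw : w ≠ []) (hwS : ∀ x ∈ w, x ∈ S) (z : List α) :
    (a ++ w ++ z).takeWhile (fun x => decide (x ∉ S)) = a ∧
      (a ++ w ++ z).dropWhile (fun x => decide (x ∉ S)) = w ++ z := by
  obtain ⟨b, w, rfl⟩ := List.exists_cons_of_ne_nil hw
  have hpass : ∀ x ∈ a, decide (x ∉ S) = true := by simpa using ha
  have hb : b ∈ S := hwS b List.mem_cons_self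
  rw [List.append_assoc, List.takeWhile_append_of_pos hpass, List.dropWhile_append_of_pos hpass]
  simp [hb]

variable {N S : Finset α} {l u w : List α} {m : ℕ}

theorem mem_sigmaOrd :
    l ∈ SigmaOrd N S ↔
      l ∈ orderings N ∧ ∃ k ≤ l.length, ((l.drop k).take #S).toFinset = S := by
  simp [SigmaOrd, orderings]

def insertBlock (m : ℕ) (u w : List α) : List α := u.take m ++ w ++ u.drop m

theorem takeWhile_dropWhile_insertBlock (hs : S.Nonempty) (hu : u ∈ orderings (N \ S))
    (hw : w ∈ orderings S) (m : ℕ) :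
    (insertBlock m u w).takeWhile (fun x => decide (x ∉ S)) = u.take m ∧
      (insertBlock m u w).dropWhile (fun x => decide (x ∉ S)) = w ++ u.drop m := by
  refine takeWhile_dropWhile_not_mem_append (fun x hx => ?_) ?_ (fun x hx => ?_) _
  · exact (mem_sdiff.mp (toFinset_take_subset hu m (List.mem_toFinset.mpr hx))).2
  · rw [← List.length_pos_iff, length_of_mem_orderings hw]
    exact hs.card_pos
  · rw [← (mem_orderings_iff_nodup.mp hw).2]
    exact List.mem_toFinset.mpr hx

theorem insertBlock_mem_orderings_iff (hS : S ⊆ N) (hw : w ∈ orderings S) :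
    insertBlock m u w ∈ orderings N ↔ u ∈ orderings (N \ S) := by
  rw [insertBlock, List.append_assoc, mem_orderings_of_perm (List.perm_append_comm_assoc _ _ _),
    List.take_append_drop, append_mem_orderings_iff hS hw]

theorem insertBlock_mem_sigmaOrd (hS : S ⊆ N) (hu : u ∈ orderings (N \ S))
    (hw : w ∈ orderings S) (hm : m ≤ #(N \ S)) : insertBlock m u w ∈ SigmaOrd N S := by
  have hmu : m ≤ u.length := length_of_mem_orderings hu ▸ hm
  have hdrop : (insertBlock m u w).drop m = w ++ u.drop m := by
    rw [insertBlock, List.append_assoc, List.drop_left' (List.length_take_of_le hmu)]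
  refine mem_sigmaOrd.mpr ⟨(insertBlock_mem_orderings_iff hS hw).mpr hu, m, ?_, ?_⟩
  · simp only [insertBlock, List.length_append, List.length_take]
    omega
  · rw [hdrop, List.take_left' (length_of_mem_orderings hw), (mem_orderings_iff_nodup.mp hw).2]

theorem insertBlock_injective (hs : S.Nonempty) {m' : ℕ} {u' w' : List α}
    (hu : u ∈ orderings (N \ S)) (hu' : u' ∈ orderings (N \ S))
    (hw : w ∈ orderings S) (hw' : w' ∈ orderings S)
    (hm : m ≤ #(N \ S)) (hm' : m' ≤ #(N \ S))
    (h : insertBlock m u w = insertBlock m' u' w') : m = m' ∧ u = u' ∧ w = w' := by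
  obtain ⟨htake, hdrop⟩ := takeWhile_dropWhile_insertBlock hs hu hw m
  obtain ⟨htake', hdrop'⟩ := takeWhile_dropWhile_insertBlock hs hu' hw' m'
  have hpre : u.take m = u'.take m' := by rw [← htake, ← htake', h]
  have hmm' : m = m' := by
    have := congrArg List.length hpre
    rwa [List.length_take_of_le (length_of_mem_orderings hu ▸ hm),
      List.length_take_of_le (length_of_mem_orderings hu' ▸ hm')] at this
  obtain ⟨hww', hsuf⟩ := List.append_inj (hdrop.symm.trans (h ▸ hdrop'))
    (by rw [length_of_mem_orderings hw, length_of_mem_orderings hw'])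
  refine ⟨hmm', ?_, hww'⟩
  rw [← List.take_append_drop m u, ← List.take_append_drop m' u', hpre, hsuf]

theorem exists_insertBlock_eq (hS : S ⊆ N) (hl : l ∈ SigmaOrd N S) :
    ∃ m u w, m ≤ #(N \ S) ∧ u ∈ orderings (N \ S) ∧ w ∈ orderings S ∧
      insertBlock m u w = l := by
  obtain ⟨hlN, k, hk, hblock⟩ := mem_sigmaOrd.mp hl
  set a := l.take k
  set w := (l.drop k).take #S
  set z := (l.drop k).drop #S
  have hl_eq : l = a ++ w ++ z := by
    rw [List.append_assoc, List.take_append_drop, List.take_append_drop]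
  have hw : w ∈ orderings S := mem_orderings_iff_nodup.mpr ⟨(List.take_sublist _ _).nodup
    ((List.drop_sublist _ _).nodup (mem_orderings_iff_nodup.mp hlN).1), hblock⟩
  have ha : a.length = k := List.length_take_of_le hk
  have hinsert : insertBlock k (a ++ z) w = l := by
    rw [insertBlock, List.take_left' ha, List.drop_left' ha, ← hl_eq]
  have hu : a ++ z ∈ orderings (N \ S) := by
    rw [← insertBlock_mem_orderings_iff hS hw, hinsert]
    exact hlN
  refine ⟨k, a ++ z, w, ?_, hu, hw, hinsert⟩
  rw [← length_of_mem_orderings hu, List.length_append]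
  omega

theorem sum_sigmaOrd {M : Type*} [AddCommMonoid M] (hS : S ⊆ N) (hs : S.Nonempty)
    (F : List α → Finset α → M) :
    ∑ l ∈ SigmaOrd N S, F ((l.dropWhile fun x => decide (x ∉ S)).take #S)
        (l.takeWhile fun x => decide (x ∉ S)).toFinset
      = ∑ m ∈ range (#(N \ S) + 1), ∑ u ∈ orderings (N \ S), ∑ w ∈ orderings S,
          F w (u.take m).toFinset := by
  have hmem : ∀ {e : ℕ × List α × List α},
      e ∈ range (#(N \ S) + 1) ×ˢ orderings (N \ S) ×ˢ orderings S ↔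
        e.1 ≤ #(N \ S) ∧ e.2.1 ∈ orderings (N \ S) ∧ e.2.2 ∈ orderings S := by
    simp only [mem_product, mem_range, Nat.lt_succ_iff, implies_true]
  simp_rw [← sum_product']
  symm
  refine sum_bij (fun e _ => insertBlock e.1 e.2.1 e.2.2) ?_ ?_ ?_ ?_
  · intro e he
    obtain ⟨hm, hu, hw⟩ := hmem.mp he
    exact insertBlock_mem_sigmaOrd hS hu hw hm
  · rintro ⟨m, u, w⟩ he ⟨m', u', w'⟩ he' h
    obtain ⟨hm, hu, hw⟩ := hmem.mp he
    obtain ⟨hm', hu', hw'⟩ := hmem.mp he'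
    obtain ⟨rfl, rfl, rfl⟩ := insertBlock_injective hs hu hu' hw hw' hm hm' h
    rfl
  · intro l hl
    obtain ⟨m, u, w, hm, hu, hw, rfl⟩ := exists_insertBlock_eq hS hl
    exact ⟨(m, u, w), hmem.mpr ⟨hm, hu, hw⟩, rfl⟩
  · intro e he
    obtain ⟨-, hu, hw⟩ := hmem.mp he
    obtain ⟨htake, hdrop⟩ := takeWhile_dropWhile_insertBlock hs hu hw e.1
    rw [htake, hdrop, List.take_left' (length_of_mem_orderings hw)]

end BlockOrderings

theorem statement5_general (N : Finset α) (v : Finset α → ℝ)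
    (S : Finset α) (hS : S ⊆ N) (hs : 2 ≤ S.card) :
    C_SO_ord N v S = C_SO N v S := by
  have hne : S.Nonempty := card_pos.mp (by omega)
  have hcard : (#(SigmaOrd N S) : ℝ) = (#(N \ S) + 1)! * (#S)! := by
    have := sum_sigmaOrd hS hne fun _ _ => (1 : ℝ)
    simp only [sum_const, card_range, card_orderings, nsmul_eq_mul, mul_one] at this
    rw [this, Nat.factorial_succ]
    push_cast
    ring
  have hsum : ∑ l ∈ SigmaOrd N S, seqAttitude v S l = (#S)! *
      ∑ T ∈ (N \ S).powerset, ((#T)! * (#(N \ S) - #T)!) • attitude v (soWeight S) S T := by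
    simp only [seqAttitude_eq_blockSeqAttitude, sum_sigmaOrd hS hne,
      sum_orderings_blockSeqAttitude v hs, ← mul_sum]
    rw [sum_range_sum_orderings_take]
  rw [C_SO_ord, hsum, hcard, C_SO, mul_sum, mul_sum]
  refine sum_congr rfl fun T _ => ?_
  rw [soExt, ← card_sdiff_of_subset hS, nsmul_eq_mul, attitude]
  push_cast
  field_simp

/-- the Shapley-Owen coopetition index defined via orderings of `N` in
which the players of `S` are consecutive coincides with the closed formula
`Σ_T (t!(n−s−t)!/(n−s+1)!) Σ_{{Q,S\Q}∈Π₂(S)} (2 q!(s−q)!/((s−1)s!)) BI({Q,S\Q},T)`. -/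
theorem statement5 (N : Finset α) (v : Finset α → ℝ) (hv : SimpleGame N v)
    (S : Finset α) (hS : S ⊆ N) (hs : 2 ≤ S.card) :
    C_SO_ord N v S = C_SO N v S :=
  statement5_general N v S hS hs
end

section
/- Let (N,v) be a simple monotone game, let η ∈ N be a null player and let S ⊆ N\{η} with |S| ≥ 2. Let p_S, p_{S∪η}, q_S, q_{S∪η} be probability distributions over Π₂(S), Π₂(S∪{η}), the subsets of N\S, and the subsets of N\(S∪{η}) respectively, and suppose there exist constants K_p(S) ≤ 1 and K_q(S) ≤ 1 such that (i) p_{S∪η}({S₁∪{η},S₂}) + p_{S∪η}({S₁,S₂∪{η}}) = K_p(S)·p_S({S₁,S₂}) for every {S₁,S₂} ∈ Π₂(S), and (ii) q_{S∪η}(T) = K_q(S)·(q_S(T) + q_S(T∪{η})) for every T ⊆ N\(S∪{η}). Then |C_{p,q}(S∪{η})| ≤ K_p(S)·K_q(S)·|C_{p,q}(S)|. -/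
open Finset

variable {α : Type*} [DecidableEq α]

lemma BI_mk (v : Finset α → ℝ) (A B T : Finset α) :
    BI v (s(A,B)) T = v (A ∪ B ∪ T) - v (A ∪ T) - v (B ∪ T) + v T := rfl

lemma us (η : α) (X : Finset α) : X ∪ {η} = insert η X := by
  ext x; simp [or_comm]

-- complement member facts
lemma compl_mem {S Q : Finset α} (hQ : Q ∈ S.powerset.filter fun Q => Q ≠ ∅ ∧ Q ≠ S) :
    S \ Q ∈ S.powerset.filter fun Q => Q ≠ ∅ ∧ Q ≠ S := by
  simp only [mem_filter, mem_powerset] at hQ ⊢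
  obtain ⟨hsub, hne, hneS⟩ := hQ
  refine ⟨sdiff_subset, ?_, ?_⟩
  · intro h
    exact hneS (subset_antisymm hsub (sdiff_eq_empty_iff_subset.mp h))
  · intro h
    apply hne
    have := Finset.sdiff_sdiff_eq_self hsub
    rw [h, Finset.sdiff_self] at this
    exact this.symm

lemma compl_ne {S Q : Finset α} (hQ : Q ∈ S.powerset.filter fun Q => Q ≠ ∅ ∧ Q ≠ S) :
    Q ≠ S \ Q := by
  simp only [mem_filter, mem_powerset] at hQ
  intro h
  apply hQ.2.1
  have : Disjoint Q Q := by nth_rewrite 2 [h]; exact Finset.disjoint_sdiff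
  simpa using this

lemma sum_Pi2 (S : Finset α) (h : Sym2 (Finset α) → ℝ) :
    ∑ Q ∈ S.powerset.filter (fun Q => Q ≠ ∅ ∧ Q ≠ S), h (s(Q, S \ Q)) =
      2 * ∑ π ∈ Pi2 S, h π := by
  rw [Finset.sum_comp h (fun Q => s(Q, S \ Q)), Finset.mul_sum]
  apply Finset.sum_congr rfl
  intro b hb
  obtain ⟨Q₀, hQ₀, hgb⟩ := Finset.mem_image.mp hb
  have hQ₀' := Finset.mem_filter.mp hQ₀
  have hsub := Finset.mem_powerset.mp hQ₀'.1
  have hfib : ((S.powerset.filter fun Q => Q ≠ ∅ ∧ Q ≠ S).filter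
      fun Q => s(Q, S \ Q) = b) = {Q₀, S \ Q₀} := by
    ext Q
    simp only [Finset.mem_filter, Finset.mem_insert, Finset.mem_singleton]
    constructor
    · rintro ⟨hQF, hg⟩
      rw [← hgb, Sym2.eq_iff] at hg
      rcases hg with ⟨h1, _⟩ | ⟨h1, _⟩
      · exact Or.inl h1
      · exact Or.inr h1
    · rintro (rfl | rfl)
      · refine ⟨by simpa using hQ₀, hgb⟩
      · refine ⟨by simpa using compl_mem hQ₀, ?_⟩
        rw [Finset.sdiff_sdiff_eq_self hsub, ← hgb, Sym2.eq_swap]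
  rw [hfib, Finset.card_pair (compl_ne hQ₀)]
  rw [nsmul_eq_mul]
  norm_num

lemma F_split {S : Finset α} {η : α} (hη : η ∉ S) (hS : S.Nonempty) :
    ((S ∪ {η}).powerset.filter fun Q => Q ≠ ∅ ∧ Q ≠ S ∪ {η}) =
      insert S (insert {η} ((S.powerset.filter fun Q => Q ≠ ∅ ∧ Q ≠ S) ∪
        (S.powerset.filter fun Q => Q ≠ ∅ ∧ Q ≠ S).image fun Q => Q ∪ {η})) := by
  ext Q
  simp only [mem_filter, mem_powerset, mem_insert, mem_union, mem_image]
  constructor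
  · rintro ⟨hsub, hne, hneS⟩
    by_cases hηQ : η ∈ Q
    · by_cases h1 : Q = {η}
      · exact Or.inr (Or.inl h1)
      · refine Or.inr (Or.inr (Or.inr ⟨Q.erase η, ⟨?_, ?_, ?_⟩, ?_⟩))
        · intro x hx
          have := hsub (Finset.mem_of_mem_erase hx)
          rcases Finset.mem_union.mp this with h | h
          · exact h
          · exact absurd (Finset.mem_singleton.mp h) (Finset.ne_of_mem_erase hx)
        · intro h
          apply h1
          have := Finset.insert_erase hηQ
          rw [h] at this
          simp at this
          exact this.symm
        · intro h
          apply hneS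
          have := Finset.insert_erase hηQ
          rw [h] at this
          rw [← this, us]
        · rw [us, Finset.insert_erase hηQ]
    · have hQS : Q ⊆ S := by
        intro x hx
        rcases Finset.mem_union.mp (hsub hx) with h | h
        · exact h
        · exact absurd hx (by rw [Finset.mem_singleton.mp h]; exact hηQ)
      by_cases h2 : Q = S
      · exact Or.inl h2
      · exact Or.inr (Or.inr (Or.inl ⟨hQS, hne, h2⟩))
  · rintro (rfl | rfl | ⟨hsub, hne, hneS⟩ | ⟨R, ⟨hsub, hne, hneS⟩, rfl⟩)
    · refine ⟨Finset.subset_union_left, hS.ne_empty, ?_⟩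
      intro h
      exact hη (h ▸ Finset.mem_union_right _ (Finset.mem_singleton_self η))
    · refine ⟨Finset.subset_union_right, by simp, ?_⟩
      intro h
      obtain ⟨x, hx⟩ := hS
      have : x ∈ ({η} : Finset α) := h ▸ Finset.mem_union_left _ hx
      exact hη (Finset.mem_singleton.mp this ▸ hx)
    · refine ⟨hsub.trans Finset.subset_union_left, hne, ?_⟩
      intro h
      exact hη (hsub (h ▸ Finset.mem_union_right _ (Finset.mem_singleton_self η)))
    · refine ⟨Finset.union_subset_union hsub (Finset.Subset.refl _), by simp [Finset.union_eq_empty], ?_⟩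
      intro h
      apply hneS
      have hηR : η ∉ R := fun hh => hη (hsub hh)
      have := congrArg (fun X => Finset.erase X η) h
      simp only [us] at this
      rw [Finset.erase_insert hηR, Finset.erase_insert hη] at this
      exact this

section nulls
variable {N : Finset α} {v : Finset α → ℝ} {η : α}

-- sdiff computations, given η ∉ S, Q ⊆ S
lemma sd1 {S : Finset α} (hη : η ∉ S) : (S ∪ {η}) \ S = {η} := by
  ext x; simp only [mem_sdiff, mem_union, mem_singleton]
  constructor
  · rintro ⟨h1 | h1, h2⟩ <;> tauto
  · rintro rfl; exact ⟨Or.inr rfl, hη⟩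

lemma sd2 {S : Finset α} (hη : η ∉ S) : (S ∪ {η}) \ {η} = S := by
  ext x; simp only [mem_sdiff, mem_union, mem_singleton]
  constructor
  · rintro ⟨h1 | h1, h2⟩ <;> tauto
  · intro h; exact ⟨Or.inl h, fun hh => hη (hh ▸ h)⟩

lemma sd3 {S Q : Finset α} (hηQ : η ∉ Q) : (S ∪ {η}) \ Q = (S \ Q) ∪ {η} := by
  ext x; simp only [mem_sdiff, mem_union, mem_singleton]
  constructor
  · rintro ⟨h1 | h1, h2⟩ <;> tauto
  · rintro (⟨h1, h2⟩ | rfl)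
    · exact ⟨Or.inl h1, h2⟩
    · exact ⟨Or.inr rfl, hηQ⟩

lemma sd4 {S Q : Finset α} (hη : η ∉ S) : (S ∪ {η}) \ (Q ∪ {η}) = S \ Q := by
  ext x; simp only [mem_sdiff, mem_union, mem_singleton]
  constructor
  · rintro ⟨h1 | h1, h2⟩
    · exact ⟨h1, fun hh => h2 (Or.inl hh)⟩
    · exact absurd (Or.inr h1) h2
  · rintro ⟨h1, h2⟩
    exact ⟨Or.inl h1, by rintro (h | rfl); exact h2 h; exact hη h1⟩

variable (hins : ∀ X ⊆ N \ {η}, v (X ∪ {η}) = v X)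
include hins

lemma BI_fst {A B T : Finset α} (hA : A ⊆ N \ {η}) (hB : B ⊆ N \ {η}) (hT : T ⊆ N \ {η}) :
    BI v (s(A ∪ {η}, B)) T = BI v (s(A, B)) T := by
  rw [BI_mk, BI_mk]
  have e1 : A ∪ {η} ∪ B ∪ T = (A ∪ B ∪ T) ∪ {η} := by
    ext x; simp only [mem_union, mem_singleton]; tauto
  have e2 : A ∪ {η} ∪ T = (A ∪ T) ∪ {η} := by
    ext x; simp only [mem_union, mem_singleton]; tauto
  rw [e1, e2, hins _ (Finset.union_subset (Finset.union_subset hA hB) hT),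
    hins _ (Finset.union_subset hA hT)]

lemma BI_snd {A B T : Finset α} (hA : A ⊆ N \ {η}) (hB : B ⊆ N \ {η}) (hT : T ⊆ N \ {η}) :
    BI v (s(A, B ∪ {η})) T = BI v (s(A, B)) T := by
  rw [Sym2.eq_swap, BI_fst hins hB hA hT, Sym2.eq_swap]

lemma BI_eta {X T : Finset α} (hX : X ⊆ N \ {η}) (hT : T ⊆ N \ {η}) :
    BI v (s({η}, X)) T = 0 := by
  rw [BI_mk]
  have e1 : {η} ∪ X ∪ T = (X ∪ T) ∪ {η} := by
    ext x; simp only [mem_union, mem_singleton]; tauto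
  have e2 : {η} ∪ T = T ∪ {η} := Finset.union_comm _ _
  rw [e1, e2, hins _ (Finset.union_subset hX hT), hins _ hT]
  ring

lemma BI_Tins {A B T : Finset α} (hA : A ⊆ N \ {η}) (hB : B ⊆ N \ {η}) (hT : T ⊆ N \ {η}) :
    BI v (s(A, B)) (T ∪ {η}) = BI v (s(A, B)) T := by
  rw [BI_mk, BI_mk]
  have e1 : A ∪ B ∪ (T ∪ {η}) = (A ∪ B ∪ T) ∪ {η} := by
    ext x; simp only [mem_union, mem_singleton]; tauto
  have e2 : A ∪ (T ∪ {η}) = (A ∪ T) ∪ {η} := by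
    ext x; simp only [mem_union, mem_singleton]; tauto
  have e3 : B ∪ (T ∪ {η}) = (B ∪ T) ∪ {η} := by
    ext x; simp only [mem_union, mem_singleton]; tauto
  rw [e1, e2, e3, hins _ (Finset.union_subset (Finset.union_subset hA hB) hT),
    hins _ (Finset.union_subset hA hT), hins _ (Finset.union_subset hB hT), hins _ hT]

end nulls

section main
variable {N : Finset α} {v : Finset α → ℝ} {η : α} {S : Finset α}

lemma nm_S (hη : η ∉ S) : S ∉ insert {η} ((S.powerset.filter fun Q => Q ≠ ∅ ∧ Q ≠ S) ∪
    (S.powerset.filter fun Q => Q ≠ ∅ ∧ Q ≠ S).image fun Q => Q ∪ {η}) := by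
  simp only [mem_insert, mem_union, mem_filter, mem_powerset, mem_image, not_or]
  refine ⟨fun h => hη (h ▸ mem_singleton_self η), fun h => h.2.2 rfl, ?_⟩
  rintro ⟨R, hR, h⟩
  exact hη (h ▸ Finset.mem_union_right _ (mem_singleton_self η))

lemma nm_eta (hη : η ∉ S) : ({η} : Finset α) ∉
    ((S.powerset.filter fun Q => Q ≠ ∅ ∧ Q ≠ S) ∪
    (S.powerset.filter fun Q => Q ≠ ∅ ∧ Q ≠ S).image fun Q => Q ∪ {η}) := by
  simp only [mem_union, mem_filter, mem_powerset, mem_image, not_or]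
  constructor
  · rintro ⟨h, -⟩
    exact hη (h (mem_singleton_self η))
  · rintro ⟨R, ⟨hsub, hne, -⟩, h⟩
    obtain ⟨x, hx⟩ := Finset.nonempty_iff_ne_empty.mpr hne
    have hx2 : x ∈ R ∪ ({η} : Finset α) := Finset.mem_union_left _ hx
    rw [h] at hx2
    exact hη ((mem_singleton.mp hx2) ▸ hsub hx)

lemma disjFS (hη : η ∉ S) : Disjoint (S.powerset.filter fun Q => Q ≠ ∅ ∧ Q ≠ S)
    ((S.powerset.filter fun Q => Q ≠ ∅ ∧ Q ≠ S).image fun Q => Q ∪ {η}) := by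
  rw [Finset.disjoint_left]
  intro Q hQ hQ'
  obtain ⟨R, hR, hRQ⟩ := mem_image.mp hQ'
  have hsub : Q ⊆ S := Finset.mem_powerset.mp (Finset.mem_filter.mp hQ).1
  apply hη
  apply hsub
  rw [← hRQ]
  simp

lemma injFS (hη : η ∉ S) : Set.InjOn (fun Q : Finset α => Q ∪ {η})
    ↑(S.powerset.filter fun Q => Q ≠ ∅ ∧ Q ≠ S) := by
  intro a ha b hb hab
  simp only [Finset.coe_filter, Set.mem_setOf_eq, mem_powerset] at ha hb
  have hna : η ∉ a := fun h => hη (ha.1 h)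
  have hnb : η ∉ b := fun h => hη (hb.1 h)
  have := congrArg (fun X : Finset α => X.erase η) hab
  simp only [us] at this
  rwa [Finset.erase_insert hna, Finset.erase_insert hnb] at this

variable (hins : ∀ X ⊆ N \ {η}, v (X ∪ {η}) = v X)
include hins

lemma attitude_Tins (p : Sym2 (Finset α) → ℝ) {T : Finset α}
    (hSsub : S ⊆ N \ {η}) (hT : T ⊆ N \ {η}) :
    attitude v p S (T ∪ {η}) = attitude v p S T := by
  unfold attitude
  apply Finset.sum_congr rfl
  intro π hπ
  obtain ⟨Q, hQ, rfl⟩ := mem_image.mp hπ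
  have hQsub : Q ⊆ S := Finset.mem_powerset.mp (Finset.mem_filter.mp hQ).1
  congr 1
  exact BI_Tins hins (hQsub.trans hSsub) (sdiff_subset.trans hSsub) hT

lemma attitude_add (p p' : Sym2 (Finset α) → ℝ) (Kp : ℝ) {T : Finset α}
    (hη : η ∉ S) (hsne : S.Nonempty) (hSsub : S ⊆ N \ {η}) (hT : T ⊆ N \ {η})
    (hpK : ∀ S₁ S₂ : Finset α, s(S₁, S₂) ∈ Pi2 S →
      p' (s(S₁ ∪ {η}, S₂)) + p' (s(S₁, S₂ ∪ {η})) = Kp * p (s(S₁, S₂))) :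
    2 * attitude v p' (S ∪ {η}) T = Kp * (2 * attitude v p S T) := by
  unfold attitude
  rw [← sum_Pi2 (S ∪ {η}) (fun π => p' π * BI v π T),
    F_split hη hsne, Finset.sum_insert (nm_S hη), Finset.sum_insert (nm_eta hη),
    Finset.sum_union (disjFS hη), Finset.sum_image (injFS hη)]
  simp only [sd1 hη, sd2 hη]
  have hz : BI v (s(S, {η})) T = 0 := by rw [Sym2.eq_swap]; exact BI_eta hins hSsub hT
  have hz2 : BI v (s({η}, S)) T = 0 := BI_eta hins hSsub hT
  rw [hz, hz2]
  have e1 : ∑ Q ∈ S.powerset.filter (fun Q => Q ≠ ∅ ∧ Q ≠ S),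
      p' (s(Q, (S ∪ {η}) \ Q)) * BI v (s(Q, (S ∪ {η}) \ Q)) T
      = ∑ Q ∈ S.powerset.filter (fun Q => Q ≠ ∅ ∧ Q ≠ S),
      p' (s(Q, (S \ Q) ∪ {η})) * BI v (s(Q, S \ Q)) T := by
    apply Finset.sum_congr rfl
    intro Q hQ
    have hQsub : Q ⊆ S := Finset.mem_powerset.mp (Finset.mem_filter.mp hQ).1
    have hηQ : η ∉ Q := fun h => hη (hQsub h)
    rw [sd3 hηQ, BI_snd hins (hQsub.trans hSsub) (sdiff_subset.trans hSsub) hT]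
  have e2 : ∑ Q ∈ S.powerset.filter (fun Q => Q ≠ ∅ ∧ Q ≠ S),
      p' (s(Q ∪ {η}, (S ∪ {η}) \ (Q ∪ {η}))) * BI v (s(Q ∪ {η}, (S ∪ {η}) \ (Q ∪ {η}))) T
      = ∑ Q ∈ S.powerset.filter (fun Q => Q ≠ ∅ ∧ Q ≠ S),
      p' (s(Q ∪ {η}, S \ Q)) * BI v (s(Q, S \ Q)) T := by
    apply Finset.sum_congr rfl
    intro Q hQ
    have hQsub : Q ⊆ S := Finset.mem_powerset.mp (Finset.mem_filter.mp hQ).1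
    rw [sd4 hη, BI_fst hins (hQsub.trans hSsub) (sdiff_subset.trans hSsub) hT]
  rw [e1, e2, mul_zero, mul_zero, zero_add, zero_add, ← Finset.sum_add_distrib]
  rw [← sum_Pi2 S (fun π => p π * BI v π T), Finset.mul_sum]
  apply Finset.sum_congr rfl
  intro Q hQ
  have hmem : s(Q, S \ Q) ∈ Pi2 S := Finset.mem_image_of_mem _ hQ
  have := hpK Q (S \ Q) hmem
  rw [← add_mul, add_comm (p' (s(Q, S \ Q ∪ {η})))]
  rw [this]
  ring
end main

section fin
variable {N : Finset α} {v : Finset α → ℝ} {η : α} {S : Finset α}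

lemma mem_Pi2_fst (hη : η ∉ S) (hsne : S.Nonempty) {Q : Finset α}
    (hQ : Q ∈ S.powerset.filter fun Q => Q ≠ ∅ ∧ Q ≠ S) :
    s(Q ∪ {η}, S \ Q) ∈ Pi2 (S ∪ {η}) := by
  apply Finset.mem_image.mpr
  refine ⟨Q ∪ {η}, ?_, by rw [sd4 hη]⟩
  rw [F_split hη hsne]
  exact Finset.mem_insert_of_mem (Finset.mem_insert_of_mem
    (Finset.mem_union_right _ (Finset.mem_image_of_mem _ hQ)))

lemma mem_Pi2_snd (hη : η ∉ S) (hsne : S.Nonempty) {Q : Finset α}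
    (hQ : Q ∈ S.powerset.filter fun Q => Q ≠ ∅ ∧ Q ≠ S) :
    s(Q, (S \ Q) ∪ {η}) ∈ Pi2 (S ∪ {η}) := by
  have hQsub : Q ⊆ S := Finset.mem_powerset.mp (Finset.mem_filter.mp hQ).1
  have hηQ : η ∉ Q := fun h => hη (hQsub h)
  apply Finset.mem_image.mpr
  refine ⟨Q, ?_, by rw [sd3 hηQ]⟩
  rw [F_split hη hsne]
  exact Finset.mem_insert_of_mem (Finset.mem_insert_of_mem (Finset.mem_union_left _ hQ))

lemma powersplit (hηN : η ∈ N) (hηS : η ∉ S) (f : Finset α → ℝ) :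
    ∑ T ∈ (N \ S).powerset, f T = ∑ T ∈ (N \ (S ∪ {η})).powerset, f T +
      ∑ T ∈ (N \ (S ∪ {η})).powerset, f (T ∪ {η}) := by
  have hηP : η ∉ N \ (S ∪ {η}) := by simp
  have hNS : N \ S = insert η (N \ (S ∪ {η})) := by
    ext x
    simp only [Finset.mem_sdiff, Finset.mem_insert, Finset.mem_union, Finset.mem_singleton]
    constructor
    · rintro ⟨hxN, hxS⟩
      by_cases h : x = η
      · exact Or.inl h
      · refine Or.inr ⟨hxN, fun hh => ?_⟩
        rcases hh with hh | hh
        · exact hxS hh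
        · exact h hh
    · rintro (rfl | ⟨hxN, hx⟩)
      · exact ⟨hηN, hηS⟩
      · exact ⟨hxN, fun hh => hx (Or.inl hh)⟩
  have hdisj : Disjoint (N \ (S ∪ {η})).powerset
      ((N \ (S ∪ {η})).powerset.image (insert η)) := by
    rw [Finset.disjoint_left]
    intro t ht ht'
    obtain ⟨r, hr, hrt⟩ := Finset.mem_image.mp ht'
    have : η ∈ t := by rw [← hrt]; exact Finset.mem_insert_self _ _
    exact hηP (Finset.mem_powerset.mp ht this)
  have hinj : ∀ a ∈ (N \ (S ∪ {η})).powerset, ∀ b ∈ (N \ (S ∪ {η})).powerset,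
      insert η a = insert η b → a = b := by
    intro a ha b hb hab
    have hna : η ∉ a := fun h => hηP (Finset.mem_powerset.mp ha h)
    have hnb : η ∉ b := fun h => hηP (Finset.mem_powerset.mp hb h)
    rw [← Finset.erase_insert hna, hab, Finset.erase_insert hnb]
  rw [hNS, Finset.powerset_insert, Finset.sum_union hdisj, Finset.sum_image hinj]
  congr 1
  apply Finset.sum_congr rfl
  intro T hT
  rw [us]

end fin

/-- adding a null player `η` to `S` can only dilute the coopetition
index: `|C_{p,q}(S ∪ {η})| ≤ K_p·K_q·|C_{p,q}(S)|` under the stated compatibility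
conditions between the distributions. -/
theorem statement7 (N : Finset α) (v : Finset α → ℝ) (hv : SimpleGame N v)
    (η : α) (hη : η ∈ N) (hnull : ∀ T ⊆ N \ {η}, v (T ∪ {η}) - v T = 0)
    (S : Finset α) (hS : S ⊆ N \ {η}) (hs : 2 ≤ S.card)
    (p p' : Sym2 (Finset α) → ℝ) (q q' : Finset α → ℝ)
    (hp0 : ∀ π ∈ Pi2 S, 0 ≤ p π) (hp1 : ∑ π ∈ Pi2 S, p π = 1)
    (hp'0 : ∀ π ∈ Pi2 (S ∪ {η}), 0 ≤ p' π) (hp'1 : ∑ π ∈ Pi2 (S ∪ {η}), p' π = 1)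
    (hq0 : ∀ T ∈ (N \ S).powerset, 0 ≤ q T) (hq1 : ∑ T ∈ (N \ S).powerset, q T = 1)
    (hq'0 : ∀ T ∈ (N \ (S ∪ {η})).powerset, 0 ≤ q' T)
    (hq'1 : ∑ T ∈ (N \ (S ∪ {η})).powerset, q' T = 1)
    (Kp Kq : ℝ) (hKp : Kp ≤ 1) (hKq : Kq ≤ 1)
    (hpK : ∀ S₁ S₂ : Finset α, s(S₁, S₂) ∈ Pi2 S →
      p' (s(S₁ ∪ {η}, S₂)) + p' (s(S₁, S₂ ∪ {η})) = Kp * p (s(S₁, S₂)))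
    (hqK : ∀ T ⊆ N \ (S ∪ {η}), q' T = Kq * (q T + q (T ∪ {η}))) :
    |coop N v p' q' (S ∪ {η})| ≤ Kp * Kq * |coop N v p q S| := by
  have hηS : η ∉ S := fun h => (Finset.mem_sdiff.mp (hS h)).2 (Finset.mem_singleton_self η)
  have hsne : S.Nonempty := Finset.card_pos.mp (by omega)
  have hins : ∀ X ⊆ N \ {η}, v (X ∪ {η}) = v X := fun X hX => by have := hnull X hX; linarith
  have hTsub : ∀ T ∈ (N \ (S ∪ {η})).powerset, T ⊆ N \ {η} := by
    intro T hT x hx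
    have hm := Finset.mem_powerset.mp hT hx
    rw [Finset.mem_sdiff] at hm ⊢
    exact ⟨hm.1, fun h => hm.2 (Finset.mem_union_right _ h)⟩
  -- Kq = 1
  have hKq1 : Kq = 1 := by
    have h1 : ∑ T ∈ (N \ (S ∪ {η})).powerset, q' T =
        Kq * ∑ T ∈ (N \ (S ∪ {η})).powerset, (q T + q (T ∪ {η})) := by
      rw [Finset.mul_sum]
      exact Finset.sum_congr rfl fun T hT => hqK T (Finset.mem_powerset.mp hT)
    rw [Finset.sum_add_distrib, ← powersplit hη hηS q, hq1, mul_one] at h1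
    rw [← h1, hq'1]
  -- Kp ≥ 0
  have hKp0 : 0 ≤ Kp := by
    have hpos : ∃ π ∈ Pi2 S, 0 < p π := by
      by_contra h
      push_neg at h
      have : ∑ π ∈ Pi2 S, p π ≤ 0 := Finset.sum_nonpos h
      linarith
    obtain ⟨π, hπ, hp⟩ := hpos
    obtain ⟨Q, hQ, rfl⟩ := Finset.mem_image.mp hπ
    have h1 := hp'0 _ (mem_Pi2_fst hηS hsne hQ)
    have h2 := hp'0 _ (mem_Pi2_snd hηS hsne hQ)
    have h3 := hpK Q (S \ Q) hπ
    nlinarith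
  -- coop equality
  have hco : coop N v p' q' (S ∪ {η}) = Kp * Kq * coop N v p q S := by
    unfold coop
    rw [powersplit hη hηS (fun T => q T * attitude v p S T)]
    rw [← Finset.sum_add_distrib, Finset.mul_sum]
    apply Finset.sum_congr rfl
    intro T hT
    have hT' : T ⊆ N \ {η} := hTsub T hT
    have ha : 2 * attitude v p' (S ∪ {η}) T = Kp * (2 * attitude v p S T) :=
      attitude_add hins p p' Kp hηS hsne hS hT' hpK
    have hb : attitude v p S (T ∪ {η}) = attitude v p S T := attitude_Tins hins p hS hT'
    have hc : q' T = Kq * (q T + q (T ∪ {η})) := hqK T (Finset.mem_powerset.mp hT)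
    have ha' : attitude v p' (S ∪ {η}) T = Kp * attitude v p S T := by linarith
    rw [hb, hc, ha']
    ring
  rw [hco, hKq1, mul_one, abs_mul, abs_of_nonneg hKp0]
end

section
/- Let (N,v) be a simple monotone game, let S ⊂ N with |S| ≥ 2, let q_S be any probability distribution over the subsets of N\S and let p_S be a strictly positive probability distribution over Π₂(S). Then the coopetition index C_{p,q}(S) equals 1 if and only if S is essential critical with respect to every T ⊆ N\S such that q_S(T) > 0. -/
open Finset

variable {α : Type*} [DecidableEq α]

/-- with `p` strictly positive on `Π₂(S)` and `q` any probability
distribution over the subsets of `N \ S`, the coopetition index `C_{p,q}(S)` equals `1`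
iff `S` is essential critical wrt every `T ⊆ N \ S` with `q(T) > 0`. -/
theorem statement10 (N : Finset α) (v : Finset α → ℝ) (hv : SimpleGame N v)
    (S : Finset α) (hSN : S ⊂ N) (hs : 2 ≤ S.card)
    (p : Sym2 (Finset α) → ℝ) (q : Finset α → ℝ)
    (hp_pos : ∀ π ∈ Pi2 S, 0 < p π) (hp_sum : ∑ π ∈ Pi2 S, p π = 1)
    (hq0 : ∀ T ∈ (N \ S).powerset, 0 ≤ q T) (hq1 : ∑ T ∈ (N \ S).powerset, q T = 1) :
    coop N v p q S = 1 ↔ ∀ T ⊆ N \ S, 0 < q T → EssentialCritical v S T := by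
  classical
  have hNsub : S ⊆ N := hSN.subset
  -- BI formula
  have hBIeq : ∀ Q T : Finset α, Q ⊆ S → BI v s(Q, S \ Q) T
      = v (S ∪ T) - v (Q ∪ T) - v (S \ Q ∪ T) + v T := by
    intro Q T hQ
    simp only [BI, Sym2.lift_mk, Finset.union_sdiff_of_subset hQ]
  -- membership in Pi2
  have hmem : ∀ π ∈ Pi2 S, ∃ Q, Q ⊆ S ∧ Q ≠ ∅ ∧ Q ≠ S ∧ π = s(Q, S \ Q) := by
    intro π hπ
    simp only [Pi2, mem_image, mem_filter, mem_powerset] at hπ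
    obtain ⟨Q, ⟨hQ, h1, h2⟩, rfl⟩ := hπ
    exact ⟨Q, hQ, h1, h2, rfl⟩
  have hmem' : ∀ Q, Q ⊆ S → Q ≠ ∅ → Q ≠ S → s(Q, S \ Q) ∈ Pi2 S := by
    intro Q h1 h2 h3
    simp only [Pi2, mem_image, mem_filter, mem_powerset]
    exact ⟨Q, ⟨h1, h2, h3⟩, rfl⟩
  -- characterization of BI for nonempty proper Q
  have hchar : ∀ T ⊆ N \ S, ∀ Q ⊆ S,
      BI v s(Q, S \ Q) T ≤ 1 ∧
      (BI v s(Q, S \ Q) T = 1 ↔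
        v (S ∪ T) = 1 ∧ v (Q ∪ T) = 0 ∧ v (S \ Q ∪ T) = 0 ∧ v T = 0) := by
    intro T hT Q hQ
    have hTN : T ⊆ N := hT.trans (sdiff_subset)
    have hsub : ∀ R : Finset α, R ⊆ S → R ∪ T ⊆ N :=
      fun R hR => union_subset (hR.trans hNsub) hTN
    have bA := hv.binary (S ∪ T) (hsub S subset_rfl)
    have bB := hv.binary (Q ∪ T) (hsub Q hQ)
    have bC := hv.binary (S \ Q ∪ T) (hsub (S \ Q) (sdiff_subset))
    have bD := hv.binary T hTN
    have m1 : v T ≤ v (Q ∪ T) := hv.mono subset_union_right (hsub Q hQ)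
    have m2 : v (Q ∪ T) ≤ v (S ∪ T) :=
      hv.mono (union_subset_union_left hQ) (hsub S subset_rfl)
    have m3 : v T ≤ v (S \ Q ∪ T) := hv.mono subset_union_right (hsub (S \ Q) sdiff_subset)
    have m4 : v (S \ Q ∪ T) ≤ v (S ∪ T) :=
      hv.mono (union_subset_union_left sdiff_subset) (hsub S subset_rfl)
    rw [hBIeq Q T hQ]
    constructor
    · rcases bA with hA | hA <;> rcases bB with hB | hB <;> rcases bC with hC | hC <;>
        rcases bD with hD | hD <;> rw [hA, hB, hC, hD] <;>
        first | (norm_num; linarith) | linarith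
    · constructor
      · intro h
        rcases bA with hA | hA <;> rcases bB with hB | hB <;> rcases bC with hC | hC <;>
          rcases bD with hD | hD <;> rw [hA, hB, hC, hD] at h ⊢ <;>
          first
            | exact ⟨rfl, rfl, rfl, rfl⟩
            | (exfalso; linarith)
      · rintro ⟨hA, hB, hC, hD⟩
        rw [hA, hB, hC, hD]; ring
  -- "all BI = 1" iff essential critical
  have key : ∀ T ⊆ N \ S, ((∀ π ∈ Pi2 S, BI v π T = 1) ↔ EssentialCritical v S T) := by
    intro T hT
    have hTN : T ⊆ N := hT.trans (sdiff_subset)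
    constructor
    · intro hall
      obtain ⟨x, hx⟩ : S.Nonempty := card_pos.mp (by omega)
      have hx1 : ({x} : Finset α) ⊆ S := singleton_subset_iff.mpr hx
      have hx2 : ({x} : Finset α) ≠ S := by
        intro h; rw [← h] at hs; simp at hs
      have h1 := hall _ (hmem' {x} hx1 (singleton_ne_empty x) hx2)
      rw [(hchar T hT {x} hx1).2] at h1
      obtain ⟨hA, -, -, hD⟩ := h1
      constructor
      · unfold Critical; rw [hA, hD]; ring
      · intro S' hS' hS'ne
        have h2 := hall _ (hmem' S' hS'.subset (nonempty_iff_ne_empty.mp hS'ne) hS'.ne)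
        rw [(hchar T hT S' hS'.subset).2] at h2
        obtain ⟨-, hB, -, hD'⟩ := h2
        unfold Critical; rw [hB, hD']; norm_num
    · rintro ⟨hcrit, hess⟩ π hπ
      obtain ⟨Q, hQ, hQne, hQS, rfl⟩ := hmem π hπ
      have hQss : Q ⊂ S := ssubset_of_subset_of_ne hQ hQS
      have hQ'ne : (S \ Q).Nonempty := by
        rw [sdiff_nonempty]; exact fun h => hQS (subset_antisymm hQ h)
      have hQ'ss : S \ Q ⊂ S := by
        apply sdiff_ssubset hQ (nonempty_iff_ne_empty.mpr hQne)
      -- values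
      have bD := hv.binary T hTN
      have hD : v T = 0 := by
        rcases bD with h | h
        · exact h
        · exfalso
          have hA1 : v (S ∪ T) ≤ 1 := by
            rcases hv.binary (S ∪ T) (union_subset hNsub hTN) with h' | h' <;>
              rw [h'] <;> norm_num
          unfold Critical at hcrit; linarith
      have hA : v (S ∪ T) = 1 := by
        unfold Critical at hcrit; linarith
      have hval : ∀ R : Finset α, R ⊂ S → R.Nonempty → v (R ∪ T) = 0 := by
        intro R hR hRne
        have := hess R hR hRne
        unfold Critical at this
        rcases hv.binary (R ∪ T) (union_subset (hR.subset.trans hNsub) hTN) with h | h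
        · exact h
        · exfalso; exact this (by rw [h, hD]; ring)
      rw [(hchar T hT Q hQ).2]
      exact ⟨hA, hval Q hQss (nonempty_iff_ne_empty.mpr hQne), hval (S \ Q) hQ'ss hQ'ne, hD⟩
  -- attitude bounds
  have hA_le : ∀ T ⊆ N \ S, attitude v p S T ≤ 1 := by
    intro T hT
    calc attitude v p S T ≤ ∑ π ∈ Pi2 S, p π := by
          apply Finset.sum_le_sum
          intro π hπ
          obtain ⟨Q, hQ, -, -, rfl⟩ := hmem π hπ
          have := (hchar T hT Q hQ).1
          nlinarith [(hp_pos _ hπ).le]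
      _ = 1 := hp_sum
  have hA_eq : ∀ T ⊆ N \ S, (attitude v p S T = 1 ↔ ∀ π ∈ Pi2 S, BI v π T = 1) := by
    intro T hT
    constructor
    · intro h1 π hπ
      have hz : ∑ π ∈ Pi2 S, p π * (1 - BI v π T) = 0 := by
        simp only [mul_sub, Finset.sum_sub_distrib, mul_one]
        rw [hp_sum]
        unfold attitude at h1
        linarith
      have hnn : ∀ π ∈ Pi2 S, 0 ≤ p π * (1 - BI v π T) := by
        intro π' hπ'
        obtain ⟨Q, hQ, -, -, rfl⟩ := hmem π' hπ'
        have := (hchar T hT Q hQ).1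
        have := (hp_pos _ hπ').le
        nlinarith
      have := (Finset.sum_eq_zero_iff_of_nonneg hnn).mp hz π hπ
      have hp := hp_pos π hπ
      have : 1 - BI v π T = 0 := by
        rcases mul_eq_zero.mp this with h | h
        · exact absurd h hp.ne'
        · exact h
      linarith
    · intro h
      unfold attitude
      calc ∑ π ∈ Pi2 S, p π * BI v π T = ∑ π ∈ Pi2 S, p π := by
            apply Finset.sum_congr rfl
            intro π hπ; rw [h π hπ, mul_one]
        _ = 1 := hp_sum
  -- coop bound and equality
  have hC_le : coop N v p q S ≤ 1 := by
    unfold coop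
    calc ∑ T ∈ (N \ S).powerset, q T * attitude v p S T ≤ ∑ T ∈ (N \ S).powerset, q T := by
          apply Finset.sum_le_sum
          intro T hT
          have h1 := hA_le T (mem_powerset.mp hT)
          have h2 := hq0 T hT
          nlinarith
      _ = 1 := hq1
  constructor
  · intro h1 T hT hqT
    rw [← key T hT, ← hA_eq T hT]
    have hz : ∑ T ∈ (N \ S).powerset, q T * (1 - attitude v p S T) = 0 := by
      simp only [mul_sub, Finset.sum_sub_distrib, mul_one]
      rw [hq1]
      unfold coop at h1
      linarith
    have hnn : ∀ T ∈ (N \ S).powerset, 0 ≤ q T * (1 - attitude v p S T) := by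
      intro T' hT'
      have := hA_le T' (mem_powerset.mp hT')
      have := hq0 T' hT'
      nlinarith
    have hTmem : T ∈ (N \ S).powerset := mem_powerset.mpr hT
    have := (Finset.sum_eq_zero_iff_of_nonneg hnn).mp hz T hTmem
    rcases mul_eq_zero.mp this with h | h
    · exact absurd h hqT.ne'
    · linarith
  · intro h
    unfold coop
    calc ∑ T ∈ (N \ S).powerset, q T * attitude v p S T = ∑ T ∈ (N \ S).powerset, q T := by
          apply Finset.sum_congr rfl
          intro T hT
          rcases eq_or_lt_of_le (hq0 T hT) with h0 | h0
          · rw [← h0]; ring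
          · rw [(hA_eq T (mem_powerset.mp hT)).mpr
              ((key T (mem_powerset.mp hT)).mpr (h T (mem_powerset.mp hT) h0)), mul_one]
      _ = 1 := hq1
end

section
/- Let v, w, u be three simple monotone games on the same finite player set N. Suppose there are coalitions W, W₁, W₂, Ŵ₁, Ŵ₂ ⊆ N with W₁, W₂ ⊂ W, W₁∪W₂ = W, W₁∩W₂ ≠ ∅, Ŵ₁ ⊆ W₁, Ŵ₂ ⊆ W₂, Ŵ₁∩Ŵ₂ = ∅, Ŵ₁∪Ŵ₂ = W, such that for every coalition R ⊆ N: w(R) = 1 if and only if (v(R) = 1 or W₁ ⊆ R or W₂ ⊆ R), and u(R) = 1 if and only if (v(R) = 1 or Ŵ₁ ⊆ R or Ŵ₂ ⊆ R); moreover W is winning in v. Then for every S with W ⊆ S ⊆ N, |S| ≥ 2, and all probability distributions p_S on Π₂(S) and q_S on the subsets of N\S: C^v_{p,q}(S) ≥ C^w_{p,q}(S) ≥ C^u_{p,q}(S). -/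
open Finset

variable {α : Type*} [DecidableEq α]

/-- If `h ≥ g` pointwise on `P(N)`, both equal 1 on `S ∪ T` and agree on each `T ⊆ N\S`,
then the coopetition index of `h` is at most that of `g`. -/
lemma coop_anti (N : Finset α) (g h : Finset α → ℝ) (S : Finset α) (hSN : S ⊆ N)
    (hle : ∀ R ⊆ N, g R ≤ h R)
    (hfull : ∀ T ∈ (N \ S).powerset, g (S ∪ T) = 1 ∧ h (S ∪ T) = 1)
    (hTeq : ∀ T ∈ (N \ S).powerset, g T = h T)
    (p : Sym2 (Finset α) → ℝ) (q : Finset α → ℝ)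
    (hp0 : ∀ π ∈ Pi2 S, 0 ≤ p π) (hq0 : ∀ T ∈ (N \ S).powerset, 0 ≤ q T) :
    coop N h p q S ≤ coop N g p q S := by
  unfold coop attitude
  refine Finset.sum_le_sum fun T hT => ?_
  refine mul_le_mul_of_nonneg_left ?_ (hq0 T hT)
  refine Finset.sum_le_sum fun π hπ => ?_
  refine mul_le_mul_of_nonneg_left ?_ (hp0 π hπ)
  obtain ⟨Q, hQ, rfl⟩ := Finset.mem_image.1 hπ
  rw [Finset.mem_filter, Finset.mem_powerset] at hQ
  have hQS : Q ⊆ S := hQ.1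
  have hTN : T ⊆ N \ S := Finset.mem_powerset.1 hT
  have hUS : Q ∪ (S \ Q) = S := Finset.union_sdiff_of_subset hQS
  have hTN' : T ⊆ N := hTN.trans (Finset.sdiff_subset)
  have h1 : Q ∪ T ⊆ N := Finset.union_subset (hQS.trans hSN) hTN'
  have h2 : (S \ Q) ∪ T ⊆ N :=
    Finset.union_subset ((Finset.sdiff_subset).trans hSN) hTN'
  simp only [BI, Sym2.lift_mk, hUS]
  have e1 := (hfull T hT).1
  have e2 := (hfull T hT).2
  have e3 := hTeq T hT
  have i1 := hle (Q ∪ T) h1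
  have i2 := hle ((S \ Q) ∪ T) h2
  linarith

/-- breaking a minimal winning coalition `W` up (first into overlapping
`W₁, W₂`, then into disjoint `W₁', W₂'`) can only lower the coopetition index of every
coalition `S ⊇ W`: `C^v_{p,q}(S) ≥ C^w_{p,q}(S) ≥ C^u_{p,q}(S)`. -/
theorem statement12 (N : Finset α) (v w u : Finset α → ℝ)
    (hv : SimpleGame N v) (hw : SimpleGame N w) (hu : SimpleGame N u)
    (W W₁ W₂ W₁' W₂' : Finset α) (hWN : W ⊆ N)
    (hW₁ : W₁ ⊂ W) (hW₂ : W₂ ⊂ W) (hWun : W₁ ∪ W₂ = W) (hWint : (W₁ ∩ W₂).Nonempty)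
    (hW₁' : W₁' ⊆ W₁) (hW₂' : W₂' ⊆ W₂) (hWdis' : W₁' ∩ W₂' = ∅) (hWun' : W₁' ∪ W₂' = W)
    (hWwin : v W = 1)
    (hwdef : ∀ R ⊆ N, (w R = 1 ↔ (v R = 1 ∨ W₁ ⊆ R ∨ W₂ ⊆ R)))
    (hudef : ∀ R ⊆ N, (u R = 1 ↔ (v R = 1 ∨ W₁' ⊆ R ∨ W₂' ⊆ R)))
    (S : Finset α) (hWS : W ⊆ S) (hSN : S ⊆ N) (hs : 2 ≤ S.card)
    (p : Sym2 (Finset α) → ℝ) (q : Finset α → ℝ)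
    (hp0 : ∀ π ∈ Pi2 S, 0 ≤ p π) (hp1 : ∑ π ∈ Pi2 S, p π = 1)
    (hq0 : ∀ T ∈ (N \ S).powerset, 0 ≤ q T) (hq1 : ∑ T ∈ (N \ S).powerset, q T = 1) :
    coop N w p q S ≤ coop N v p q S ∧ coop N u p q S ≤ coop N w p q S := by
  -- basic nonemptiness facts
  have hW₁ne : W₁.Nonempty := hWint.mono Finset.inter_subset_left
  have hW₂ne : W₂.Nonempty := hWint.mono Finset.inter_subset_right
  have hW₁'ne : W₁'.Nonempty := by
    rcases Finset.eq_empty_or_nonempty W₁' with h | h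
    · exfalso
      rw [h, Finset.empty_union] at hWun'
      exact (hW₂.2 (hWun' ▸ hW₂')).elim
    · exact h
  have hW₂'ne : W₂'.Nonempty := by
    rcases Finset.eq_empty_or_nonempty W₂' with h | h
    · exfalso
      rw [h, Finset.union_empty] at hWun'
      exact (hW₁.2 (hWun' ▸ hW₁')).elim
    · exact h
  have hW₁S : W₁ ⊆ S := (hW₁.1).trans hWS
  have hW₂S : W₂ ⊆ S := (hW₂.1).trans hWS
  have hW₁'S : W₁' ⊆ S := hW₁'.trans hW₁S
  have hW₂'S : W₂' ⊆ S := hW₂'.trans hW₂S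
  -- pointwise order v ≤ w ≤ u on P(N)
  have hvw : ∀ R ⊆ N, v R ≤ w R := by
    intro R hR
    rcases hv.binary R hR with h0 | h1
    · rw [h0]
      rcases hw.binary R hR with h | h <;> rw [h] <;> norm_num
    · rw [h1, (hwdef R hR).2 (Or.inl h1)]
  have hwu : ∀ R ⊆ N, w R ≤ u R := by
    intro R hR
    rcases hw.binary R hR with h0 | h1
    · rw [h0]
      rcases hu.binary R hR with h | h <;> rw [h] <;> norm_num
    · rw [h1, (hudef R hR).2 ?_]
      rcases (hwdef R hR).1 h1 with h | h | h
      · exact Or.inl h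
      · exact Or.inr (Or.inl (hW₁'.trans h))
      · exact Or.inr (Or.inr (hW₂'.trans h))
  -- all three games equal 1 on S ∪ T for T ⊆ N \ S
  have hSTsub : ∀ T ∈ (N \ S).powerset, S ∪ T ⊆ N := by
    intro T hT
    exact Finset.union_subset hSN
      ((Finset.mem_powerset.1 hT).trans Finset.sdiff_subset)
  have hvfull : ∀ T ∈ (N \ S).powerset, v (S ∪ T) = 1 := by
    intro T hT
    have h1 : v W ≤ v (S ∪ T) :=
      hv.mono (hWS.trans Finset.subset_union_left) (hSTsub T hT)
    rw [hWwin] at h1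
    rcases hv.binary _ (hSTsub T hT) with h | h
    · linarith
    · exact h
  have hwfull : ∀ T ∈ (N \ S).powerset, w (S ∪ T) = 1 := fun T hT =>
    (hwdef _ (hSTsub T hT)).2 (Or.inl (hvfull T hT))
  have hufull : ∀ T ∈ (N \ S).powerset, u (S ∪ T) = 1 := fun T hT =>
    (hudef _ (hSTsub T hT)).2 (Or.inl (hvfull T hT))
  -- no Wᵢ (or Wᵢ') fits inside a T ⊆ N \ S
  have hnot : ∀ (A : Finset α), A.Nonempty → A ⊆ S →
      ∀ T ∈ (N \ S).powerset, ¬ A ⊆ T := by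
    intro A hAne hAS T hT hAT
    obtain ⟨a, ha⟩ := hAne
    have h1 : a ∈ N \ S := (Finset.mem_powerset.1 hT) (hAT ha)
    exact (Finset.mem_sdiff.1 h1).2 (hAS ha)
  have hTsubN : ∀ T ∈ (N \ S).powerset, T ⊆ N := fun T hT =>
    (Finset.mem_powerset.1 hT).trans Finset.sdiff_subset
  -- agreement on external coalitions
  have heq : ∀ (g : Finset α → ℝ), SimpleGame N g →
      (∀ R ⊆ N, (g R = 1 ↔ (v R = 1 ∨ False ∨ False)) → True) → True := fun _ _ _ => trivial
  have hvw_eq : ∀ T ∈ (N \ S).powerset, v T = w T := by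
    intro T hT
    rcases hw.binary T (hTsubN T hT) with h | h
    · rw [h]
      rcases hv.binary T (hTsubN T hT) with h' | h'
      · exact h'
      · exfalso
        have := (hwdef T (hTsubN T hT)).2 (Or.inl h')
        rw [h] at this; norm_num at this
    · rw [h]
      rcases (hwdef T (hTsubN T hT)).1 h with h' | h' | h'
      · exact h'
      · exact absurd h' (hnot W₁ hW₁ne hW₁S T hT)
      · exact absurd h' (hnot W₂ hW₂ne hW₂S T hT)
  have hwu_eq : ∀ T ∈ (N \ S).powerset, w T = u T := by
    intro T hT
    rw [← hvw_eq T hT]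
    rcases hu.binary T (hTsubN T hT) with h | h
    · rw [h]
      rcases hv.binary T (hTsubN T hT) with h' | h'
      · exact h'
      · exfalso
        have := (hudef T (hTsubN T hT)).2 (Or.inl h')
        rw [h] at this; norm_num at this
    · rw [h]
      rcases (hudef T (hTsubN T hT)).1 h with h' | h' | h'
      · exact h'
      · exact absurd h' (hnot W₁' hW₁'ne hW₁'S T hT)
      · exact absurd h' (hnot W₂' hW₂'ne hW₂'S T hT)
  constructor
  · exact coop_anti N v w S hSN hvw
      (fun T hT => ⟨hvfull T hT, hwfull T hT⟩) hvw_eq p q hp0 hq0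
  · exact coop_anti N w u S hSN hwu
      (fun T hT => ⟨hwfull T hT, hufull T hT⟩) hwu_eq p q hp0 hq0
end
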